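/- The simplicial chain complex (C_#(X), ∂_#) of X with ℤ coefficients is isomorphic, as a chain complex of abelian groups, to the Thom–Smale chain complex (C_#^𝒱(X̃), ∂_#^𝒱) of X̃ with respect to the prism gradient vector field 𝒱; an isomorphism is given on generators by g_q(σ_Ā) = σ for σ ∈ A and g_q(σ_B̄) = σ for σ ∈ B ∖ A. Consequently H_#(X) ≅ H_#^𝒱(X̃). -/

import Mathlib

open scoped Classical

noncomputable section

namespace DMT

variable {V : Type*} {U : Type*}

/-- An abstract simplicial complex: a nonempty collection of nonempty finite
sets of vertices that is closed under taking nonempty subsets. -/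
def IsComplex (K : Set (Finset V)) : Prop :=
  K.Nonempty ∧ ∀ σ ∈ K, σ.Nonempty ∧ ∀ τ : Finset V, τ ⊆ σ → τ.Nonempty → τ ∈ K

/-- The incidence number `⟨τ, σ⟩` of `σ` with respect to `τ`, where simplices are
oriented by listing their vertices increasingly: it is `(-1)^i` if `σ` is obtained
from `τ` by deleting the `i`-th vertex, and `0` if `σ` is not a facet of `τ`. -/
def incidence [LinearOrder V] (τ σ : Finset V) : ℤ :=
  if σ ⊆ τ ∧ τ.card = σ.card + 1 then
    ∑ v ∈ τ \ σ, (-1 : ℤ) ^ (τ.filter fun u => u < v).card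
  else 0

/-- A discrete vector field on a complex `K`: a set of pairs `(σ, τ)` of simplices of `K`
with `σ` a facet of `τ`, such that every simplex appears in at most one pair. -/
def IsDVF (K : Set (Finset U)) (W : Set (Finset U × Finset U)) : Prop :=
  (∀ p ∈ W, p.1 ∈ K ∧ p.2 ∈ K ∧ p.1 ⊆ p.2 ∧ p.2.card = p.1.card + 1) ∧
  ∀ p ∈ W, ∀ p' ∈ W, (p.1 = p'.1 ∨ p.1 = p'.2 ∨ p.2 = p'.1 ∨ p.2 = p'.2) → p = p'

/-- A simplex is critical for `W` if it appears in no pair of `W`. -/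
def IsCritical (W : Set (Finset U × Finset U)) (σ : Finset U) : Prop :=
  ∀ p ∈ W, p.1 ≠ σ ∧ p.2 ≠ σ

/-- The set of `q`-dimensional `W`-critical simplices of `K`. -/
def critSet (K : Set (Finset U)) (W : Set (Finset U × Finset U)) (q : ℕ) : Set (Finset U) :=
  {σ | σ ∈ K ∧ σ.card = q + 1 ∧ IsCritical W σ}

/-- A `W`-trajectory `τ₀, σ₁, τ₁, …, σ_k, τ_k`. -/
structure Traj (W : Set (Finset U × Finset U)) where
  k : ℕ
  t : ℕ → Finset U
  s : ℕ → Finset U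
  dim_t : ∀ i ≤ k, (t i).card = (t 0).card
  dim_s : ∀ i, 1 ≤ i → i ≤ k → (s i).card + 1 = (t 0).card
  mem : ∀ i, 1 ≤ i → i ≤ k → (s i, t i) ∈ W
  sub : ∀ i, 1 ≤ i → i ≤ k → s i ⊆ t (i - 1)
  nmem : ∀ i, 1 ≤ i → i ≤ k → (s i, t (i - 1)) ∉ W

/-- `W` is acyclic: there is no nontrivial closed `W`-trajectory. -/
def IsAcyclic (W : Set (Finset U × Finset U)) : Prop :=
  ¬ ∃ P : Traj W, 1 < P.k ∧ P.t 0 = P.t P.k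

/-- A gradient vector field on `K`: an acyclic discrete vector field. -/
def IsGVF (K : Set (Finset U)) (W : Set (Finset U × Finset U)) : Prop :=
  IsDVF K W ∧ IsAcyclic W

/-- An extended `W`-trajectory `τ₀, σ₁, τ₁, …, σ_k, τ_k, σ_{k+1}`, with
`(σᵢ, τᵢ) ∈ W` for `1 ≤ i ≤ k`, and `σᵢ ⊆ τ_{i-1}`, `(σᵢ, τ_{i-1}) ∉ W` for
`1 ≤ i ≤ k + 1`.  (The values of `t` and `s` outside the relevant ranges are
normalized to `∅`.) -/
structure ExtTraj (W : Set (Finset U × Finset U)) where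
  k : ℕ
  t : ℕ → Finset U
  s : ℕ → Finset U
  dim_t : ∀ i ≤ k, (t i).card = (t 0).card
  dim_s : ∀ i, 1 ≤ i → i ≤ k + 1 → (s i).card + 1 = (t 0).card
  mem : ∀ i, 1 ≤ i → i ≤ k → (s i, t i) ∈ W
  sub : ∀ i, 1 ≤ i → i ≤ k + 1 → s i ⊆ t (i - 1)
  nmem : ∀ i, 1 ≤ i → i ≤ k + 1 → (s i, t (i - 1)) ∉ W
  pad_t : ∀ i, k < i → t i = ∅
  pad_s : ∀ i, i = 0 ∨ k + 1 < i → s i = ∅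

/-- The weight of an extended trajectory. -/
def ExtTraj.weight [LinearOrder U] {W : Set (Finset U × Finset U)} (P : ExtTraj W) : ℤ :=
  (∏ i ∈ Finset.range P.k,
      -(incidence (P.t i) (P.s (i + 1)) * incidence (P.t (i + 1)) (P.s (i + 1)))) *
    incidence (P.t P.k) (P.s (P.k + 1))

/-- `Γ(τ, σ)`: the extended `W`-trajectories with initial simplex `τ` and terminal
simplex `σ`. -/
def Gamma (W : Set (Finset U × Finset U)) (τ σ : Finset U) : Set (ExtTraj W) :=
  {P | P.t 0 = τ ∧ P.s (P.k + 1) = σ}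

/-- The Thom–Smale boundary coefficient `Σ_{P ∈ Γ(τ,σ)} w(P)`. -/
def tsCoeff [LinearOrder U] (W : Set (Finset U × Finset U)) (τ σ : Finset U) : ℤ :=
  ∑ᶠ P ∈ Gamma W τ σ, ExtTraj.weight P

/-- The copy of a complex under a vertex map. -/
def copy [DecidableEq U] (f : V → U) (K : Set (Finset V)) : Set (Finset U) :=
  {σ | ∃ γ ∈ K, σ = γ.image f}

/-- Pull a simplex of a copy back to the original vertex set. -/
def pull [Fintype V] [DecidableEq U] (f : V → U) (σ : Finset U) : Finset V :=
  Finset.univ.filter fun v => f v ∈ σ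

/-- The ground simplex of a simplex of the prism (with `a`-vertices and `b`-vertices). -/
def GS [Fintype V] [DecidableEq U] (a b : V → U) (σ : Finset U) : Finset V :=
  Finset.univ.filter fun v => a v ∈ σ ∨ b v ∈ σ

/-- The simplex `{a_{i₀}, …, a_{i_r}, b_{i_r}, …, b_{i_q}}` of the prism over
`γ = {v_{i₀} < … < v_{i_q}}`, with pivot `v = v_{i_r}`. -/
def mixA [LinearOrder V] [DecidableEq U] (a b : V → U) (γ : Finset V) (v : V) : Finset U :=
  (γ.filter fun u => u ≤ v).image a ∪ (γ.filter fun u => v ≤ u).image b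

/-- The simplex `{a_{i₀}, …, a_{i_{r-1}}, b_{i_r}, …, b_{i_q}}` of the prism over
`γ`, with pivot `v = v_{i_r}`. -/
def mixB [LinearOrder V] [DecidableEq U] (a b : V → U) (γ : Finset V) (v : V) : Finset U :=
  (γ.filter fun u => u < v).image a ∪ (γ.filter fun u => v ≤ u).image b

/-- `A_γ`. -/
def AsetOf [LinearOrder V] [DecidableEq U] (a b : V → U) (γ : Finset V) : Set (Finset U) :=
  {σ | ∃ v ∈ γ, σ = mixA a b γ v}

/-- `B_γ`. -/
def BsetOf [LinearOrder V] [DecidableEq U] (a b : V → U) (γ : Finset V) : Set (Finset U) :=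
  {σ | ∃ v ∈ γ, σ = mixB a b γ v} ∪ {γ.image a}

/-- `S_γ = A_γ ∪ B_γ`. -/
def SsetOf [LinearOrder V] [DecidableEq U] (a b : V → U) (γ : Finset V) : Set (Finset U) :=
  AsetOf a b γ ∪ BsetOf a b γ

/-- The prism `ℙ(C)` over the complex `C`, realized with `a`-vertices and `b`-vertices. -/
def prism [LinearOrder V] [DecidableEq U] (a b : V → U) (C : Set (Finset V)) :
    Set (Finset U) :=
  ⋃ γ ∈ C, SsetOf a b γ

/-- The interior simplices of the prism. -/
def prismInt [LinearOrder V] [DecidableEq U] (a b : V → U) (C : Set (Finset V)) :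
    Set (Finset U) :=
  prism a b C \ (copy a C ∪ copy b C)

/-- The complex `X̃ = Ā ∪ ℙ((A ∩ B)‾) ∪ B̄`. -/
def tilde [LinearOrder V] [DecidableEq U] (a b : V → U) (A B : Set (Finset V)) :
    Set (Finset U) :=
  copy a A ∪ prism a b (A ∩ B) ∪ copy b B

/-- The prism pairing `𝒱`: for each `γ ∈ C` and `v ∈ γ`, the pair
`([a_{i₀},…,a_{i_{r-1}}, b_{i_r},…,b_{i_q}], [a_{i₀},…,a_{i_r}, b_{i_r},…,b_{i_q}])`. -/
def prismVF [LinearOrder V] [DecidableEq U] (a b : V → U) (C : Set (Finset V)) :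
    Set (Finset U × Finset U) :=
  {p | ∃ γ ∈ C, ∃ v ∈ γ, p = (mixB a b γ v, mixA a b γ v)}

/-- `v` is the minimum vertex of `γ`. -/
def isMin [Preorder V] (γ : Finset V) (v : V) : Prop :=
  v ∈ γ ∧ ∀ u ∈ γ, v ≤ u

/-- The pairing `W'` of the interior simplices of the prism, induced by the gradient
vector field `WC` on the copy (under `c`) of the intersection complex `C`. -/
def WprimeSet [Fintype V] [LinearOrder V] [DecidableEq U] (a b c : V → U)
    (C : Set (Finset V)) (WC : Set (Finset U × Finset U)) : Set (Finset U × Finset U) :=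
  {p | ∃ pr ∈ WC, ∃ v, isMin (pull c pr.1) v ∧
      p = (mixA a b (pull c pr.1) v, mixA a b (pull c pr.2) v)} ∪
  {p | ∃ pr ∈ WC, ∃ v vm am, isMin (pull c pr.2) vm ∧ isMin (pull c pr.1) am ∧
      v ∈ pull c pr.2 ∧ v ≠ vm ∧
      p = (mixB a b (pull c pr.2) v, mixA a b (pull c pr.2) (if v = am then vm else v))} ∪
  {p | ∃ pr ∈ WC, ∃ v am, isMin (pull c pr.1) am ∧ v ∈ pull c pr.1 ∧ v ≠ am ∧
      p = (mixB a b (pull c pr.1) v, mixA a b (pull c pr.1) v)} ∪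
  {p | ∃ γ : Finset V, γ ∈ C ∧ IsCritical WC (γ.image c) ∧
      ∃ v vm, isMin γ vm ∧ v ∈ γ ∧ v ≠ vm ∧ p = (mixB a b γ v, mixA a b γ v)}

/-- The discrete vector field `W = W_Ā ∪ W_B̄ ∪ W'` on `X̃`. -/
def Wfield [Fintype V] [LinearOrder V] [DecidableEq U] (a b c : V → U)
    (C : Set (Finset V)) (WA WB WC : Set (Finset U × Finset U)) :
    Set (Finset U × Finset U) :=
  WA ∪ WB ∪ WprimeSet a b c C WC

/-- Transfer a simplex of the copy under `c` to the corresponding simplex of the copy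
under `f`. -/
def transferMap [Fintype V] [DecidableEq U] (c f : V → U) (σ : Finset U) : Finset U :=
  (pull c σ).image f

/-- A mixed (Mayer–Vietoris) trajectory: a descending extended trajectory
`τ₀, σ₁, τ₁, …, σ_p, τ_p` for `WC` in the copy of the intersection, transferred by
`tr` into another copy, followed by an ascending path
`τ'_p, α_p, τ'_{p+1}, …, α_{p+l-1}, τ'_{p+l}` for `WD`. -/
structure MixTraj (WC WD : Set (Finset U × Finset U)) (tr : Finset U → Finset U) where
  p : ℕ
  l : ℕ
  t : ℕ → Finset U
  s : ℕ → Finset U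
  t' : ℕ → Finset U
  a' : ℕ → Finset U
  dim_t : ∀ i ≤ p, (t i).card = (t 0).card
  dim_s : ∀ i, 1 ≤ i → i ≤ p → (s i).card + 1 = (t 0).card
  dim_t' : ∀ i, p ≤ i → i ≤ p + l → (t' i).card = (t 0).card
  dim_a' : ∀ i, p ≤ i → i < p + l → (a' i).card = (t 0).card + 1
  mem_s : ∀ i, 1 ≤ i → i ≤ p → (s i, t i) ∈ WC
  sub_s : ∀ i, 1 ≤ i → i ≤ p → s i ⊆ t (i - 1)
  nmem_s : ∀ i, 1 ≤ i → i ≤ p → (s i, t (i - 1)) ∉ WC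
  link : t' p = tr (t p)
  mem_a : ∀ i, p ≤ i → i < p + l → (t' i, a' i) ∈ WD
  sub_a : ∀ i, p + 1 ≤ i → i ≤ p + l → t' i ⊆ a' (i - 1)
  nmem_a : ∀ i, p + 1 ≤ i → i ≤ p + l → (t' i, a' (i - 1)) ∉ WD
  pad_t : ∀ i, p < i → t i = ∅
  pad_s : ∀ i, i = 0 ∨ p < i → s i = ∅
  pad_t' : ∀ i, i < p ∨ p + l < i → t' i = ∅
  pad_a' : ∀ i, i < p ∨ p + l ≤ i → a' i = ∅

/-- The product of incidence signs along a mixed trajectory (without the leading sign). -/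
def MixTraj.wcore [LinearOrder U] {WC WD : Set (Finset U × Finset U)}
    {tr : Finset U → Finset U} (P : MixTraj WC WD tr) : ℤ :=
  (∏ i ∈ Finset.range P.p,
      -(incidence (P.t i) (P.s (i + 1)) * incidence (P.t (i + 1)) (P.s (i + 1)))) *
  ∏ i ∈ Finset.range P.l,
      -(incidence (P.a' (P.p + i)) (P.t' (P.p + i)) *
        incidence (P.a' (P.p + i)) (P.t' (P.p + i + 1)))

/-- A Mayer–Vietoris trajectory: one of the five kinds. -/
inductive MVTraj (WA WB WC : Set (Finset U × Finset U)) (trA trB : Finset U → Finset U)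
  | viaA : ExtTraj WA → MVTraj WA WB WC trA trB
  | viaB : ExtTraj WB → MVTraj WA WB WC trA trB
  | viaC : ExtTraj WC → MVTraj WA WB WC trA trB
  | crossA : MixTraj WC WA trA → MVTraj WA WB WC trA trB
  | crossB : MixTraj WC WB trB → MVTraj WA WB WC trA trB

/-- The weight `w_M` of a Mayer–Vietoris trajectory. -/
def MVTraj.wM [LinearOrder U] {WA WB WC : Set (Finset U × Finset U)}
    {trA trB : Finset U → Finset U} : MVTraj WA WB WC trA trB → ℤ
  | .viaA P => P.weight
  | .viaB P => P.weight
  | .viaC P => -P.weight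
  | .crossA P => -P.wcore
  | .crossB P => P.wcore

/-- A Mayer–Vietoris trajectory goes from `β` to `α` (with the required criticality of
the endpoints in the respective copies `Abar`, `Bbar`, `Cbar`). -/
def MVTraj.ends {WA WB WC : Set (Finset U × Finset U)} {trA trB : Finset U → Finset U}
    (Abar Bbar Cbar : Set (Finset U)) :
    MVTraj WA WB WC trA trB → Finset U → Finset U → Prop
  | .viaA T, β, α => T.t 0 = β ∧ T.s (T.k + 1) = α ∧
      β ∈ Abar ∧ IsCritical WA β ∧ α ∈ Abar ∧ IsCritical WA α
  | .viaB T, β, α => T.t 0 = β ∧ T.s (T.k + 1) = α ∧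
      β ∈ Bbar ∧ IsCritical WB β ∧ α ∈ Bbar ∧ IsCritical WB α
  | .viaC T, β, α => T.t 0 = β ∧ T.s (T.k + 1) = α ∧
      β ∈ Cbar ∧ IsCritical WC β ∧ α ∈ Cbar ∧ IsCritical WC α
  | .crossA T, β, α => T.t 0 = β ∧ T.t' (T.p + T.l) = α ∧
      β ∈ Cbar ∧ IsCritical WC β ∧ α ∈ Abar ∧ IsCritical WA α
  | .crossB T, β, α => T.t 0 = β ∧ T.t' (T.p + T.l) = α ∧
      β ∈ Cbar ∧ IsCritical WC β ∧ α ∈ Bbar ∧ IsCritical WB α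

/-- `MV(β, α)`: the set of Mayer–Vietoris trajectories from `β` to `α`. -/
def MVset (WA WB WC : Set (Finset U × Finset U)) (trA trB : Finset U → Finset U)
    (Abar Bbar Cbar : Set (Finset U)) (β α : Finset U) :
    Set (MVTraj WA WB WC trA trB) :=
  {P | MVTraj.ends Abar Bbar Cbar P β α}

/-- The Mayer–Vietoris boundary coefficient `Σ_{P ∈ MV(β,α)} w_M(P)`. -/
def mvCoeff [LinearOrder U] (WA WB WC : Set (Finset U × Finset U))
    (trA trB : Finset U → Finset U) (Abar Bbar Cbar : Set (Finset U))
    (β α : Finset U) : ℤ :=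
  ∑ᶠ P ∈ MVset WA WB WC trA trB Abar Bbar Cbar β α, MVTraj.wM P

/-- The generating sets `D_q(X)`. -/
def Dset (Abar Bbar Cbar : Set (Finset U)) (WA WB WC : Set (Finset U × Finset U)) :
    ℕ → Set (Finset U)
  | 0 => critSet Abar WA 0 ∪ critSet Bbar WB 0
  | (q + 1) => critSet Abar WA (q + 1) ∪ critSet Bbar WB (q + 1) ∪ critSet Cbar WC q

/-- The `q`-dimensional simplices of a complex. -/
def simpSet (K : Set (Finset V)) (q : ℕ) : Set (Finset V) :=
  {σ | σ ∈ K ∧ σ.card = q + 1}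

/-- The boundary homomorphism of a chain complex of free abelian groups, determined by a
matrix of coefficients. -/
def chainBoundary {ι κ : Type*} (coeff : ι → κ → ℤ) : (ι →₀ ℤ) →ₗ[ℤ] (κ →₀ ℤ) :=
  Finsupp.lsum ℤ fun i =>
    LinearMap.toSpanSingleton ℤ (κ →₀ ℤ) (∑ᶠ j : κ, coeff i j • Finsupp.single j 1)

/-- The family of boundary maps of the chain complex of free abelian groups with
generating sets `S q` and boundary coefficients `coeff` (with the convention that the
boundary in degree `0` is the zero map). -/
def fullBoundary {W : Type*} (S : ℕ → Set (Finset W)) (coeff : Finset W → Finset W → ℤ) :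
    ∀ q : ℕ, ((S q : Set (Finset W)) →₀ ℤ) →+ ((S (q - 1) : Set (Finset W)) →₀ ℤ)
  | 0 => 0
  | (q + 1) => (chainBoundary fun (i : (S (q + 1) : Set (Finset W))) (j : (S q : Set (Finset W))) =>
      coeff (i : Finset W) (j : Finset W)).toAddMonoidHom

/-- `ker d ⧸ im d'`. -/
abbrev homologyAt {L M N : Type*} [AddCommGroup L] [AddCommGroup M] [AddCommGroup N]
    (d : M →+ N) (d' : L →+ M) : Type _ :=
  (↥d.ker) ⧸ (AddSubgroup.comap d.ker.subtype d'.range)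

/-- The `q`-th homology group of the chain complex of free abelian groups with
generating sets `S` and boundary coefficients `coeff`. -/
abbrev homologyOf {W : Type*} (S : ℕ → Set (Finset W)) (coeff : Finset W → Finset W → ℤ)
    (q : ℕ) : Type _ :=
  homologyAt (fullBoundary S coeff q) (fullBoundary S coeff (q + 1))

/-- The map `f` from critical simplices of `X̃` to generators of the Mayer–Vietoris
complex: the identity on critical simplices of `Ā` and `B̄`, and the (copy in
`(A ∩ B)‾` of the) ground simplex on interior critical simplices of the prism. -/
def fmap [Fintype V] [LinearOrder V] [DecidableEq U] (a b c : V → U)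
    (C : Set (Finset V)) (τ : Finset U) : Finset U :=
  if τ ∈ prismInt a b C then (GS a b τ).image c else τ

/-- The simplex `[a_{i₀}, b_{i₀}, …, b_{i_{q-1}}]` of the prism over `γ`. -/
def aMinCopy [Fintype V] [LinearOrder V] [DecidableEq U] (a b : V → U) (γ : Finset V) :
    Finset U :=
  (γ.filter fun u => ∀ w ∈ γ, u ≤ w).image a ∪ γ.image b

/-- The map `g` from generators of the Mayer–Vietoris complex to critical simplices of
`X̃`: the identity on critical simplices of `Ā` and `B̄`, and
`[c_{i₀},…,c_{i_{q-1}}] ↦ [a_{i₀}, b_{i₀}, …, b_{i_{q-1}}]` on critical simplices of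
`(A ∩ B)‾`. -/
def gmap [Fintype V] [LinearOrder V] [DecidableEq U] (a b c : V → U)
    (Cbar : Set (Finset U)) (α : Finset U) : Finset U :=
  if α ∈ Cbar then aMinCopy a b (pull c α) else α

section ProofDev

open Finset

variable {V : Type*} {U : Type*} [Fintype V] [LinearOrder V] [LinearOrder U]
variable {a b : V → U} {A B C : Set (Finset V)}

section Basic

variable (ha : StrictMono a) (hb : StrictMono b) (hord : ∀ u v : V, a u < b v)

omit [Fintype V]

include hord in
lemma hab_of_hord (u v : V) : a u ≠ b v := (hord u v).ne

include ha in
lemma a_mem_image_a {u : V} {σ : Finset V} : a u ∈ σ.image a ↔ u ∈ σ := by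
  simp [Finset.mem_image, ha.injective.eq_iff]

include hb in
lemma b_mem_image_b {u : V} {σ : Finset V} : b u ∈ σ.image b ↔ u ∈ σ := by
  simp [Finset.mem_image, hb.injective.eq_iff]

include hord in
lemma b_not_mem_image_a {u : V} {σ : Finset V} : b u ∉ σ.image a := by
  simp only [Finset.mem_image, not_exists]
  rintro x ⟨-, h⟩
  exact (hord x u).ne h

include hord in
lemma a_not_mem_image_b {u : V} {σ : Finset V} : a u ∉ σ.image b := by
  simp only [Finset.mem_image, not_exists]
  rintro x ⟨-, h⟩
  exact (hord u x).ne h.symm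

include ha hord in
lemma a_mem_mixA {u v : V} {γ : Finset V} : a u ∈ mixA a b γ v ↔ u ∈ γ ∧ u ≤ v := by
  constructor
  · intro h
    rcases Finset.mem_union.1 h with h | h
    · rcases Finset.mem_image.1 h with ⟨w, hw, hw2⟩
      rcases Finset.mem_filter.1 hw with ⟨h1, h2⟩
      obtain rfl : w = u := ha.injective hw2
      exact ⟨h1, h2⟩
    · exact absurd h (a_not_mem_image_b hord)
  · rintro ⟨h1, h2⟩
    exact Finset.mem_union_left _ (Finset.mem_image_of_mem a (Finset.mem_filter.2 ⟨h1, h2⟩))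

include hb hord in
lemma b_mem_mixA {u v : V} {γ : Finset V} : b u ∈ mixA a b γ v ↔ u ∈ γ ∧ v ≤ u := by
  constructor
  · intro h
    rcases Finset.mem_union.1 h with h | h
    · exact absurd h (b_not_mem_image_a hord)
    · rcases Finset.mem_image.1 h with ⟨w, hw, hw2⟩
      rcases Finset.mem_filter.1 hw with ⟨h1, h2⟩
      obtain rfl : w = u := hb.injective hw2
      exact ⟨h1, h2⟩
  · rintro ⟨h1, h2⟩
    exact Finset.mem_union_right _ (Finset.mem_image_of_mem b (Finset.mem_filter.2 ⟨h1, h2⟩))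

include ha hord in
lemma a_mem_mixB {u v : V} {γ : Finset V} : a u ∈ mixB a b γ v ↔ u ∈ γ ∧ u < v := by
  constructor
  · intro h
    rcases Finset.mem_union.1 h with h | h
    · rcases Finset.mem_image.1 h with ⟨w, hw, hw2⟩
      rcases Finset.mem_filter.1 hw with ⟨h1, h2⟩
      obtain rfl : w = u := ha.injective hw2
      exact ⟨h1, h2⟩
    · exact absurd h (a_not_mem_image_b hord)
  · rintro ⟨h1, h2⟩
    exact Finset.mem_union_left _ (Finset.mem_image_of_mem a (Finset.mem_filter.2 ⟨h1, h2⟩))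

include hb hord in
lemma b_mem_mixB {u v : V} {γ : Finset V} : b u ∈ mixB a b γ v ↔ u ∈ γ ∧ v ≤ u := by
  constructor
  · intro h
    rcases Finset.mem_union.1 h with h | h
    · exact absurd h (b_not_mem_image_a hord)
    · rcases Finset.mem_image.1 h with ⟨w, hw, hw2⟩
      rcases Finset.mem_filter.1 hw with ⟨h1, h2⟩
      obtain rfl : w = u := hb.injective hw2
      exact ⟨h1, h2⟩
  · rintro ⟨h1, h2⟩
    exact Finset.mem_union_right _ (Finset.mem_image_of_mem b (Finset.mem_filter.2 ⟨h1, h2⟩))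

lemma mem_mixA_elim {x : U} {v : V} {γ : Finset V} (h : x ∈ mixA a b γ v) :
    (∃ u ∈ γ, x = a u) ∨ ∃ u ∈ γ, x = b u := by
  rcases Finset.mem_union.1 h with h | h <;> rcases Finset.mem_image.1 h with ⟨w, hw, hw2⟩
  · exact Or.inl ⟨w, (Finset.mem_filter.1 hw).1, hw2.symm⟩
  · exact Or.inr ⟨w, (Finset.mem_filter.1 hw).1, hw2.symm⟩

lemma mem_mixB_elim {x : U} {v : V} {γ : Finset V} (h : x ∈ mixB a b γ v) :
    (∃ u ∈ γ, x = a u) ∨ ∃ u ∈ γ, x = b u := by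
  rcases Finset.mem_union.1 h with h | h <;> rcases Finset.mem_image.1 h with ⟨w, hw, hw2⟩
  · exact Or.inl ⟨w, (Finset.mem_filter.1 hw).1, hw2.symm⟩
  · exact Or.inr ⟨w, (Finset.mem_filter.1 hw).1, hw2.symm⟩

include ha hord in
lemma a_not_mem_mixB {v : V} {γ : Finset V} : a v ∉ mixB a b γ v := by
  intro h
  exact absurd ((a_mem_mixB ha hord).1 h).2 (lt_irrefl v)

include ha hb hord in
lemma mixA_eq_insert {v : V} {γ : Finset V} (hv : v ∈ γ) :
    mixA a b γ v = insert (a v) (mixB a b γ v) := by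
  ext x
  constructor
  · intro h
    rcases mem_mixA_elim h with ⟨u, hu, rfl⟩ | ⟨u, hu, rfl⟩
    · rcases ((a_mem_mixA ha hord).1 h).2.lt_or_eq with h2 | h2
      · exact Finset.mem_insert_of_mem ((a_mem_mixB ha hord).2 ⟨hu, h2⟩)
      · exact Finset.mem_insert.2 (Or.inl (by rw [h2]))
    · exact Finset.mem_insert_of_mem
        ((b_mem_mixB hb hord).2 ⟨hu, ((b_mem_mixA hb hord).1 h).2⟩)
  · intro h
    rcases Finset.mem_insert.1 h with rfl | h
    · exact (a_mem_mixA ha hord).2 ⟨hv, le_refl v⟩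
    · rcases mem_mixB_elim h with ⟨u, hu, rfl⟩ | ⟨u, hu, rfl⟩
      · exact (a_mem_mixA ha hord).2 ⟨hu, ((a_mem_mixB ha hord).1 h).2.le⟩
      · exact (b_mem_mixA hb hord).2 ⟨hu, ((b_mem_mixB hb hord).1 h).2⟩

include ha hb hord in
lemma card_mixB {v : V} {γ : Finset V} (hv : v ∈ γ) : (mixB a b γ v).card = γ.card := by
  rw [mixB, Finset.card_union_of_disjoint, Finset.card_image_of_injective _ ha.injective,
    Finset.card_image_of_injective _ hb.injective]
  · have : γ.filter (fun u => v ≤ u) = γ.filter (fun u => ¬ u < v) := by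
      apply Finset.filter_congr; intro u _; simp [not_lt]
    rw [this, Finset.card_filter_add_card_filter_not]
  · rw [Finset.disjoint_left]
    rintro x hx hx'
    rcases Finset.mem_image.1 hx with ⟨u, -, rfl⟩
    exact a_not_mem_image_b hord hx'

include ha hb hord in
lemma card_mixA {v : V} {γ : Finset V} (hv : v ∈ γ) : (mixA a b γ v).card = γ.card + 1 := by
  rw [mixA_eq_insert ha hb hord hv, Finset.card_insert_of_notMem (a_not_mem_mixB ha hord),
    card_mixB ha hb hord hv]


lemma mixB_eq_image_b {v : V} {γ : Finset V} (h : ∀ u ∈ γ, v ≤ u) :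
    mixB a b γ v = γ.image b := by
  rw [mixB]
  have h1 : γ.filter (fun u => u < v) = ∅ := by
    rw [Finset.filter_eq_empty_iff]; intro u hu; exact not_lt.2 (h u hu)
  have h2 : γ.filter (fun u => v ≤ u) = γ := by
    rw [Finset.filter_eq_self]; exact h
  rw [h1, h2, Finset.image_empty, Finset.empty_union]

include ha hb hord in
lemma mixA_eq_image_a {v : V} {γ : Finset V} (hv : v ∈ γ) (h : ∀ u ∈ γ, u ≤ v) :
    mixA a b γ v = insert (b v) (γ.image a) := by
  rw [mixA]
  have h1 : γ.filter (fun u => u ≤ v) = γ := by rw [Finset.filter_eq_self]; exact h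
  have h2 : γ.filter (fun u => v ≤ u) = {v} := by
    ext u
    simp only [Finset.mem_filter, Finset.mem_singleton]
    constructor
    · rintro ⟨hu, hu2⟩; exact le_antisymm (h u hu) hu2
    · intro h3; rw [h3]; exact ⟨hv, le_refl _⟩
  rw [h1, h2, Finset.image_singleton]
  ext x
  simp only [Finset.mem_union, Finset.mem_insert, Finset.mem_singleton]
  tauto

include ha hb hord in
lemma mixB_injective {v v' : V} {γ γ' : Finset V} (hv : v ∈ γ) (hv' : v' ∈ γ')
    (h : mixB a b γ v = mixB a b γ' v') : γ = γ' ∧ v = v' := by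
  have hmem : ∀ u, u ∈ γ ↔ u ∈ γ' := by
    intro u
    constructor
    · intro hu
      rcases lt_or_ge u v with h2 | h2
      · have := (a_mem_mixB ha hord).1 (h ▸ (a_mem_mixB ha hord).2 ⟨hu, h2⟩)
        exact this.1
      · have := (b_mem_mixB hb hord).1 (h ▸ (b_mem_mixB hb hord).2 ⟨hu, h2⟩)
        exact this.1
    · intro hu
      rcases lt_or_ge u v' with h2 | h2
      · have := (a_mem_mixB ha hord).1 (h ▸ (a_mem_mixB ha hord).2 ⟨hu, h2⟩ : a u ∈ mixB a b γ v)
        exact this.1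
      · have := (b_mem_mixB hb hord).1 (h ▸ (b_mem_mixB hb hord).2 ⟨hu, h2⟩ : b u ∈ mixB a b γ v)
        exact this.1
  have hγ : γ = γ' := Finset.ext hmem
  subst hγ
  refine ⟨rfl, ?_⟩
  have h1 : v' ≤ v := ((b_mem_mixB hb hord).1 (h ▸ (b_mem_mixB hb hord).2 ⟨hv, le_refl v⟩)).2
  have h2 : v ≤ v' := ((b_mem_mixB hb hord).1 (h.symm ▸ (b_mem_mixB hb hord).2 ⟨hv', le_refl v'⟩)).2
  exact le_antisymm h2 h1

lemma mem_prismVF {p : Finset U × Finset U} :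
    p ∈ prismVF a b C ↔ ∃ γ ∈ C, ∃ v ∈ γ, p.1 = mixB a b γ v ∧ p.2 = mixA a b γ v := by
  simp only [prismVF, Set.mem_setOf_eq, Prod.ext_iff]

lemma mem_prismVF_pair {s t : Finset U} :
    (s, t) ∈ prismVF a b C ↔ ∃ γ ∈ C, ∃ v ∈ γ, s = mixB a b γ v ∧ t = mixA a b γ v := by
  simp only [prismVF, Set.mem_setOf_eq, Prod.mk.injEq]

include ha hb hord in
lemma crit_pure_a (δ : Finset V) : IsCritical (prismVF a b C) (δ.image a) := by
  intro p hp
  rcases mem_prismVF.1 hp with ⟨γ, hγ, v, hv, h1, h2⟩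
  constructor
  · intro h
    have : b v ∈ δ.image a := by
      rw [← h, h1]; exact (b_mem_mixB hb hord).2 ⟨hv, le_refl v⟩
    exact b_not_mem_image_a hord this
  · intro h
    have : b v ∈ δ.image a := by
      rw [← h, h2]; exact (b_mem_mixA hb hord).2 ⟨hv, le_refl v⟩
    exact b_not_mem_image_a hord this

include ha hb hord in
lemma crit_pure_b {δ : Finset V} (hδ : δ ∉ C) : IsCritical (prismVF a b C) (δ.image b) := by
  intro p hp
  rcases mem_prismVF.1 hp with ⟨γ, hγ, v, hv, h1, h2⟩
  constructor
  · intro h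
    -- mixB γ v = image b δ
    have hfil : ∀ u ∈ γ, v ≤ u := by
      intro u hu
      by_contra h3
      have : a u ∈ δ.image b := by
        rw [← h, h1]; exact (a_mem_mixB ha hord).2 ⟨hu, not_le.1 h3⟩
      exact a_not_mem_image_b hord this
    have : γ.image b = δ.image b := by rw [← mixB_eq_image_b hfil, ← h1, h]
    have : γ = δ := Finset.image_injective hb.injective this
    exact hδ (this ▸ hγ)
  · intro h
    have : a v ∈ δ.image b := by
      rw [← h, h2]; exact (a_mem_mixA ha hord).2 ⟨hv, le_refl v⟩
    exact a_not_mem_image_b hord this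

lemma noncrit_mixA {γ : Finset V} {v : V} (hγ : γ ∈ C) (hv : v ∈ γ) :
    ¬ IsCritical (prismVF a b C) (mixA a b γ v) := by
  intro h
  exact (h (mixB a b γ v, mixA a b γ v) ⟨γ, hγ, v, hv, rfl⟩).2 rfl

lemma noncrit_mixB {γ : Finset V} {v : V} (hγ : γ ∈ C) (hv : v ∈ γ) :
    ¬ IsCritical (prismVF a b C) (mixB a b γ v) := by
  intro h
  exact (h (mixB a b γ v, mixA a b γ v) ⟨γ, hγ, v, hv, rfl⟩).1 rfl

end Basic

end ProofDev

section CritChar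

open Finset

variable {V : Type*} {U : Type*} [Fintype V] [LinearOrder V] [LinearOrder U]
variable {a b : V → U} {A B : Set (Finset V)}
variable (ha : StrictMono a) (hb : StrictMono b) (hord : ∀ u v : V, a u < b v)

lemma mem_copy {f : V → U} {K : Set (Finset V)} {σ : Finset U} :
    σ ∈ copy f K ↔ ∃ γ ∈ K, σ = γ.image f := Iff.rfl

include ha hord in
lemma GS_image_a (σ : Finset V) : GS a b (σ.image a) = σ := by
  ext v
  simp only [GS, Finset.mem_filter, Finset.mem_univ, true_and]
  constructor
  · rintro (h | h)
    · exact (a_mem_image_a ha).1 h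
    · exact absurd h (b_not_mem_image_a hord)
  · intro h
    exact Or.inl ((a_mem_image_a ha).2 h)

include hb hord in
lemma GS_image_b (σ : Finset V) : GS a b (σ.image b) = σ := by
  ext v
  simp only [GS, Finset.mem_filter, Finset.mem_univ, true_and]
  constructor
  · rintro (h | h)
    · exact absurd h (a_not_mem_image_b hord)
    · exact (b_mem_image_b hb).1 h
  · intro h
    exact Or.inr ((b_mem_image_b hb).2 h)

lemma acopy_mem_tilde {σ : Finset V} (hσ : σ ∈ A) : σ.image a ∈ tilde a b A B :=
  Or.inl (Or.inl ⟨σ, hσ, rfl⟩)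

lemma bcopy_mem_tilde {σ : Finset V} (hσ : σ ∈ B) : σ.image b ∈ tilde a b A B :=
  Or.inr ⟨σ, hσ, rfl⟩

include ha hb hord in
lemma noncrit_bcopy_of_memC {σ : Finset V} (hσ : σ ∈ A ∩ B) (hne : σ.Nonempty) :
    ¬ IsCritical (prismVF a b (A ∩ B)) (σ.image b) := by
  have hm : σ.min' hne ∈ σ := σ.min'_mem hne
  have heq : mixB a b σ (σ.min' hne) = σ.image b :=
    mixB_eq_image_b (fun u hu => σ.min'_le u hu)
  intro h
  exact (h (mixB a b σ (σ.min' hne), mixA a b σ (σ.min' hne)) ⟨σ, hσ, σ.min' hne, hm, rfl⟩).1 heq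

include ha hb hord in
lemma critSet_char (hA : IsComplex A) (hB : IsComplex B) (q : ℕ) :
    critSet (tilde a b A B) (prismVF a b (A ∩ B)) q =
      {τ | ∃ σ, σ ∈ A ∧ σ.card = q + 1 ∧ τ = σ.image a} ∪
      {τ | ∃ σ, σ ∈ B ∧ σ ∉ A ∧ σ.card = q + 1 ∧ τ = σ.image b} := by
  ext τ
  constructor
  · rintro ⟨htil, hcard, hcrit⟩
    rcases htil with (h | h) | h
    · rcases h with ⟨σ, hσ, rfl⟩
      exact Or.inl ⟨σ, hσ, by rwa [Finset.card_image_of_injective _ ha.injective] at hcard, rfl⟩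
    · simp only [prism, Set.mem_iUnion] at h
      rcases h with ⟨γ, hγ, hS⟩
      rcases hS with hAs | hBs
      · rcases hAs with ⟨v, hv, rfl⟩
        exact absurd hcrit (noncrit_mixA hγ hv)
      · rcases hBs with ⟨v, hv, rfl⟩ | rfl
        · exact absurd hcrit (noncrit_mixB hγ hv)
        · exact Or.inl ⟨γ, hγ.1,
            by rwa [Finset.card_image_of_injective _ ha.injective] at hcard, rfl⟩
    · rcases h with ⟨σ, hσ, rfl⟩
      have hcs : σ.card = q + 1 := by
        rwa [Finset.card_image_of_injective _ hb.injective] at hcard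
      refine Or.inr ⟨σ, hσ, ?_, hcs, rfl⟩
      intro hσA
      exact noncrit_bcopy_of_memC ha hb hord ⟨hσA, hσ⟩
        (Finset.card_pos.1 (by omega)) hcrit
  · rintro (⟨σ, hσ, hcard, rfl⟩ | ⟨σ, hσB, hσA, hcard, rfl⟩)
    · exact ⟨acopy_mem_tilde hσ,
        by rw [Finset.card_image_of_injective _ ha.injective]; exact hcard,
        crit_pure_a ha hb hord σ⟩
    · refine ⟨bcopy_mem_tilde hσB,
        by rw [Finset.card_image_of_injective _ hb.injective]; exact hcard,
        crit_pure_b ha hb hord ?_⟩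
      intro h
      exact hσA h.1

end CritChar

section IncidenceLemmas

open Finset

variable {V : Type*} {U : Type*} [LinearOrder V] [LinearOrder U]

lemma incidence_insert {v : V} {σ : Finset V} (hv : v ∉ σ) :
    incidence (insert v σ) σ = (-1 : ℤ) ^ ((σ.filter (· < v)).card) := by
  rw [incidence, if_pos ⟨Finset.subset_insert v σ, Finset.card_insert_of_notMem hv⟩,
    Finset.insert_sdiff_cancel hv, Finset.sum_singleton, Finset.filter_insert,
    if_neg (lt_irrefl v)]

lemma incidence_eq_zero {τ σ : Finset V} (h : ¬(σ ⊆ τ ∧ τ.card = σ.card + 1)) :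
    incidence τ σ = 0 := if_neg h

lemma incidence_image {φ : V → U} (hφ : StrictMono φ) (τ σ : Finset V) :
    incidence (τ.image φ) (σ.image φ) = incidence τ σ := by
  by_cases h : σ ⊆ τ ∧ τ.card = σ.card + 1
  · rw [incidence, incidence, if_pos h, if_pos (by
      rw [Finset.card_image_of_injective _ hφ.injective,
        Finset.card_image_of_injective _ hφ.injective]
      exact ⟨Finset.image_subset_image h.1, h.2⟩)]
    rw [← Finset.image_sdiff _ _ hφ.injective, Finset.sum_image
      (fun x _ y _ h => hφ.injective h)]
    apply Finset.sum_congr rfl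
    intro v _
    congr 1
    rw [Finset.filter_image]
    rw [Finset.card_image_of_injective _ hφ.injective]
    congr 1
    apply Finset.filter_congr
    intro u _
    simp [hφ.lt_iff_lt]
  · rw [incidence_eq_zero h, incidence_eq_zero (by
      rw [Finset.card_image_of_injective _ hφ.injective,
        Finset.card_image_of_injective _ hφ.injective]
      intro h2
      exact h ⟨(Finset.image_subset_image_iff hφ.injective).1 h2.1, h2.2⟩)]

lemma filter_lt_succ {γ : Finset V} {v v' : V} (hv : v ∈ γ) (hlt : v < v')
    (hmid : ∀ u ∈ γ, ¬(v < u ∧ u < v')) :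
    γ.filter (· < v') = insert v (γ.filter (· < v)) := by
  ext u
  simp only [Finset.mem_filter, Finset.mem_insert]
  constructor
  · rintro ⟨hu, hu2⟩
    rcases lt_trichotomy u v with h | h | h
    · exact Or.inr ⟨hu, h⟩
    · exact Or.inl h
    · exact absurd ⟨h, hu2⟩ (hmid u hu)
  · rintro (rfl | ⟨hu, hu2⟩)
    · exact ⟨hv, hlt⟩
    · exact ⟨hu, hu2.trans hlt⟩

lemma rank_succ {γ : Finset V} {v v' : V} (hv : v ∈ γ) (hlt : v < v')
    (hmid : ∀ u ∈ γ, ¬(v < u ∧ u < v')) :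
    (γ.filter (· < v')).card = (γ.filter (· < v)).card + 1 := by
  rw [filter_lt_succ hv hlt hmid]
  apply Finset.card_insert_of_notMem
  simp

lemma rank_injOn {γ : Finset V} {u v : V} (hu : u ∈ γ) (hv : v ∈ γ)
    (h : (γ.filter (· < u)).card = (γ.filter (· < v)).card) : u = v := by
  rcases lt_trichotomy u v with h2 | h2 | h2
  · exfalso
    have hss : γ.filter (· < u) ⊂ γ.filter (· < v) := by
      refine ⟨fun x hx => ?_, ?_⟩
      · rcases Finset.mem_filter.1 hx with ⟨h3, h4⟩
        exact Finset.mem_filter.2 ⟨h3, h4.trans h2⟩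
      · intro hsub
        exact absurd (Finset.mem_filter.1 (hsub (Finset.mem_filter.2 ⟨hu, h2⟩))).2 (lt_irrefl u)
    exact absurd h (Finset.card_lt_card hss).ne
  · exact h2
  · exfalso
    have hss : γ.filter (· < v) ⊂ γ.filter (· < u) := by
      refine ⟨fun x hx => ?_, ?_⟩
      · rcases Finset.mem_filter.1 hx with ⟨h3, h4⟩
        exact Finset.mem_filter.2 ⟨h3, h4.trans h2⟩
      · intro hsub
        exact absurd (Finset.mem_filter.1 (hsub (Finset.mem_filter.2 ⟨hv, h2⟩))).2 (lt_irrefl v)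
    exact absurd h.symm (Finset.card_lt_card hss).ne

lemma rank_max {γ : Finset V} {v : V} (hv : v ∈ γ) (hmax : ∀ u ∈ γ, u ≤ v) :
    (γ.filter (· < v)).card + 1 = γ.card := by
  have : γ.filter (· < v) = γ.erase v := by
    ext u
    simp only [Finset.mem_filter, Finset.mem_erase]
    constructor
    · rintro ⟨hu, hu2⟩; exact ⟨hu2.ne, hu⟩
    · rintro ⟨hne, hu⟩; exact ⟨hu, (hmax u hu).lt_of_ne hne⟩
  rw [this, Finset.card_erase_of_mem hv]
  have : 1 ≤ γ.card := Finset.card_pos.2 ⟨v, hv⟩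
  omega

lemma rank_orderEmbOfFin {γ : Finset V} {n : ℕ} (h : γ.card = n) (j : Fin n) :
    (γ.filter (· < γ.orderEmbOfFin h j)).card = (j : ℕ) := by
  have hrange : ∀ x, x ∈ γ ↔ ∃ l : Fin n, γ.orderEmbOfFin h l = x := by
    intro x
    rw [← Finset.mem_coe, ← Finset.range_orderEmbOfFin γ h]
    exact ⟨fun hx => hx, fun hx => hx⟩
  have : γ.filter (· < γ.orderEmbOfFin h j) =
      (Finset.univ.filter fun l : Fin n => l < j).image (γ.orderEmbOfFin h) := by
    ext x
    simp only [Finset.mem_filter, Finset.mem_image, Finset.mem_univ, true_and]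
    constructor
    · rintro ⟨hx, hx2⟩
      rcases (hrange x).1 hx with ⟨l, rfl⟩
      exact ⟨l, (OrderEmbedding.lt_iff_lt _).1 hx2, rfl⟩
    · rintro ⟨l, hl, rfl⟩
      exact ⟨(hrange _).2 ⟨l, rfl⟩, (OrderEmbedding.lt_iff_lt _).2 hl⟩
  rw [this, Finset.card_image_of_injective _ (γ.orderEmbOfFin h).injective]
  have : (Finset.univ.filter fun l : Fin n => l < j) = Finset.Iio j := by
    ext l; simp
  rw [this, Fin.card_Iio]

end IncidenceLemmas

section MixIncidence

open Finset

variable {V : Type*} {U : Type*} [LinearOrder V] [LinearOrder U]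
variable {a b : V → U}
variable (ha : StrictMono a) (hb : StrictMono b) (hord : ∀ u v : V, a u < b v)

include ha hb hord

lemma incidence_mixA_mixB {γ : Finset V} {v : V} (hv : v ∈ γ) :
    incidence (mixA a b γ v) (mixB a b γ v) = (-1 : ℤ) ^ ((γ.filter (· < v)).card) := by
  rw [mixA_eq_insert ha hb hord hv, incidence_insert (a_not_mem_mixB ha hord)]
  congr 1
  rw [mixB, Finset.filter_union]
  have h1 : (((γ.filter fun u => u < v).image a).filter (· < a v)) =
      (γ.filter fun u => u < v).image a := by
    rw [Finset.filter_eq_self]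
    intro x hx
    rcases Finset.mem_image.1 hx with ⟨u, hu, rfl⟩
    exact ha.lt_iff_lt.2 (Finset.mem_filter.1 hu).2
  have h2 : (((γ.filter fun u => v ≤ u).image b).filter (· < a v)) = ∅ := by
    rw [Finset.filter_eq_empty_iff]
    intro x hx
    rcases Finset.mem_image.1 hx with ⟨u, hu, rfl⟩
    exact not_lt.2 (hord v u).le
  rw [h1, h2, Finset.union_empty, Finset.card_image_of_injective _ ha.injective]

lemma incidence_mixA_mixB_succ {γ : Finset V} {v v' : V} (hv : v ∈ γ) (hv' : v' ∈ γ)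
    (hlt : v < v') (hmid : ∀ u ∈ γ, ¬(v < u ∧ u < v')) :
    incidence (mixA a b γ v) (mixB a b γ v') =
      (-1 : ℤ) ^ ((γ.filter (· < v)).card + 1) := by
  have hbv : b v ∉ mixB a b γ v' := by
    intro h
    rcases mem_mixB_elim h with ⟨u, hu, hx⟩ | ⟨u, hu, hx⟩
    · exact hab_of_hord hord u v hx.symm
    · have := ((b_mem_mixB hb hord).1 h).2
      exact absurd (hlt.trans_le this) (lt_irrefl v)
  have hins : mixA a b γ v = insert (b v) (mixB a b γ v') := by
    ext x
    constructor
    · intro h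
      rcases mem_mixA_elim h with ⟨u, hu, rfl⟩ | ⟨u, hu, rfl⟩
      · have h2 := ((a_mem_mixA ha hord).1 h).2
        refine Finset.mem_insert_of_mem ((a_mem_mixB ha hord).2 ⟨hu, h2.trans_lt hlt⟩)
      · have h2 := ((b_mem_mixA hb hord).1 h).2
        rcases h2.lt_or_eq with h3 | h3
        · have h4 : v' ≤ u := by
            by_contra h5
            exact hmid u hu ⟨h3, not_le.1 h5⟩
          exact Finset.mem_insert_of_mem ((b_mem_mixB hb hord).2 ⟨hu, h4⟩)
        · rw [← h3]; exact Finset.mem_insert_self _ _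
    · intro h
      rcases Finset.mem_insert.1 h with rfl | h
      · exact (b_mem_mixA hb hord).2 ⟨hv, le_refl v⟩
      · rcases mem_mixB_elim h with ⟨u, hu, rfl⟩ | ⟨u, hu, rfl⟩
        · have h2 := ((a_mem_mixB ha hord).1 h).2
          have h3 : u ≤ v := by
            by_contra h4
            exact hmid u hu ⟨not_le.1 h4, h2⟩
          exact (a_mem_mixA ha hord).2 ⟨hu, h3⟩
        · have h2 := ((b_mem_mixB hb hord).1 h).2
          exact (b_mem_mixA hb hord).2 ⟨hu, (hlt.trans_le h2).le⟩
  rw [hins, incidence_insert hbv]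
  congr 1
  rw [mixB, Finset.filter_union]
  have h1 : (((γ.filter fun u => u < v').image a).filter (· < b v)) =
      (γ.filter fun u => u < v').image a := by
    rw [Finset.filter_eq_self]
    intro x hx
    rcases Finset.mem_image.1 hx with ⟨u, hu, rfl⟩
    exact hord u v
  have h2 : (((γ.filter fun u => v' ≤ u).image b).filter (· < b v)) = ∅ := by
    rw [Finset.filter_eq_empty_iff]
    intro x hx
    rcases Finset.mem_image.1 hx with ⟨u, hu, rfl⟩
    have := (Finset.mem_filter.1 hu).2
    exact not_lt.2 (hb.le_iff_le.2 ((hlt.trans_le this).le))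
  rw [h1, h2, Finset.union_empty, Finset.card_image_of_injective _ ha.injective,
    rank_succ hv hlt hmid]

lemma incidence_mixA_top {γ : Finset V} {v : V} (hv : v ∈ γ) (hmax : ∀ u ∈ γ, u ≤ v) :
    incidence (mixA a b γ v) (γ.image a) = (-1 : ℤ) ^ γ.card := by
  rw [mixA_eq_image_a ha hb hord hv hmax, incidence_insert (b_not_mem_image_a hord)]
  congr 1
  have h1 : ((γ.image a).filter (· < b v)) = γ.image a := by
    rw [Finset.filter_eq_self]
    intro x hx
    rcases Finset.mem_image.1 hx with ⟨u, hu, rfl⟩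
    exact hord u v
  rw [h1, Finset.card_image_of_injective _ ha.injective]

end MixIncidence

section Trajectories

open Finset

variable {V : Type*} {U : Type*} [LinearOrder V] [LinearOrder U]
variable {a b : V → U} {C : Set (Finset V)}
variable (ha : StrictMono a) (hb : StrictMono b) (hord : ∀ u v : V, a u < b v)

lemma ExtTraj.ext' {W : Set (Finset U × Finset U)} {P Q : ExtTraj W} (hk : P.k = Q.k)
    (ht : ∀ i, P.t i = Q.t i) (hs : ∀ i, P.s i = Q.s i) : P = Q := by
  obtain ⟨k, t, s, _, _, _, _, _, _, _⟩ := P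
  obtain ⟨k', t', s', _, _, _, _, _, _, _⟩ := Q
  obtain rfl : k = k' := hk
  obtain rfl : t = t' := funext ht
  obtain rfl : s = s' := funext hs
  rfl

/-- The trivial (length-zero) extended trajectory. -/
def trivTraj (W : Set (Finset U × Finset U)) (τ σ' : Finset U) (hsub : σ' ⊆ τ)
    (hcard : σ'.card + 1 = τ.card) (hW : (σ', τ) ∉ W) : ExtTraj W where
  k := 0
  t := fun i => if i = 0 then τ else ∅
  s := fun i => if i = 1 then σ' else ∅
  dim_t := by intro i hi; interval_cases i; rfl
  dim_s := by intro i h1 h2; interval_cases i; simpa using hcard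
  mem := by intro i h1 h2; omega
  sub := by intro i h1 h2; interval_cases i; simpa using hsub
  nmem := by intro i h1 h2; interval_cases i; simpa using hW
  pad_t := by
    intro i hi
    show (if i = 0 then τ else ∅) = ∅
    rw [if_neg (by omega)]
  pad_s := by
    intro i hi
    show (if i = 1 then σ' else ∅) = ∅
    rw [if_neg (by omega)]

@[simp] lemma trivTraj_k {W : Set (Finset U × Finset U)} {τ σ' : Finset U} {h1 h2 h3} :
    (trivTraj W τ σ' h1 h2 h3).k = 0 := rfl

lemma trivTraj_weight {W : Set (Finset U × Finset U)} {τ σ' : Finset U} {h1 h2 h3} :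
    (trivTraj W τ σ' h1 h2 h3).weight = incidence τ σ' := by
  rw [ExtTraj.weight]
  simp [trivTraj]

lemma trivTraj_mem_Gamma {W : Set (Finset U × Finset U)} {τ σ' : Finset U} {h1 h2 h3} :
    trivTraj W τ σ' h1 h2 h3 ∈ Gamma W τ σ' := by
  constructor <;> rfl

lemma eq_trivTraj {W : Set (Finset U × Finset U)} {τ σ' : Finset U} {h1 h2 h3}
    {P : ExtTraj W} (hP : P ∈ Gamma W τ σ') (hk : P.k = 0) :
    P = trivTraj W τ σ' h1 h2 h3 := by
  obtain ⟨h0, hterm⟩ := hP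
  apply ExtTraj.ext' (by rw [hk]; rfl)
  · intro i
    rcases Nat.eq_zero_or_pos i with rfl | hi
    · rw [h0]; rfl
    · rw [P.pad_t i (by omega)]
      show _ = if i = 0 then τ else ∅
      rw [if_neg (by omega)]
  · intro i
    rcases Nat.eq_zero_or_pos i with rfl | hi
    · rw [P.pad_s 0 (Or.inl rfl)]; rfl
    · show _ = if i = 1 then σ' else ∅
      rcases eq_or_ne i 1 with rfl | hne
      · rw [if_pos rfl, ← hterm, hk]
      · rw [if_neg hne, P.pad_s i (Or.inr (by omega))]

include ha hb hord in
lemma not_W_fst_pure_a {δ : Finset V} {t : Finset U} :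
    (δ.image a, t) ∉ prismVF a b C := by
  intro h
  rcases mem_prismVF_pair.1 h with ⟨γ, hγ, v, hv, h1, h2⟩
  have : b v ∈ δ.image a := by
    rw [h1]; exact (b_mem_mixB hb hord).2 ⟨hv, le_refl v⟩
  exact b_not_mem_image_a hord this

include ha hb hord in
lemma not_W_snd_pure_b {δ : Finset V} {s : Finset U} :
    (s, δ.image b) ∉ prismVF a b C := by
  intro h
  rcases mem_prismVF_pair.1 h with ⟨γ, hγ, v, hv, h1, h2⟩
  have : a v ∈ δ.image b := by
    rw [h2]; exact (a_mem_mixA ha hord).2 ⟨hv, le_refl v⟩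
  exact a_not_mem_image_b hord this

include ha hb hord in
lemma k_eq_zero_of_pure_a {σ : Finset V} (P : ExtTraj (prismVF a b C))
    (h0 : P.t 0 = σ.image a) : P.k = 0 := by
  by_contra hk
  have hk1 : 1 ≤ P.k := by omega
  obtain ⟨γ, hγ, v, hv, h1, h2⟩ := mem_prismVF_pair.1 (P.mem 1 le_rfl hk1)
  have hsub := P.sub 1 le_rfl (by omega)
  rw [h1, h0] at hsub
  exact b_not_mem_image_a hord (hsub ((b_mem_mixB hb hord).2 ⟨hv, le_refl v⟩))

include ha hb hord in
lemma mixB_subset_mixA_step {γ γ' : Finset V} {v v' : V} (hv : v ∈ γ) (hv' : v' ∈ γ')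
    (hcard : γ'.card = γ.card) (hsub : mixB a b γ' v' ⊆ mixA a b γ v)
    (hne : ¬(γ' = γ ∧ v' = v)) :
    γ' = γ ∧ v < v' ∧ ∀ u ∈ γ, ¬(v < u ∧ u < v') := by
  have hγ'γ : γ' ⊆ γ := by
    intro u hu
    rcases lt_or_ge u v' with h2 | h2
    · exact ((a_mem_mixA ha hord).1 (hsub ((a_mem_mixB ha hord).2 ⟨hu, h2⟩))).1
    · exact ((b_mem_mixA hb hord).1 (hsub ((b_mem_mixB hb hord).2 ⟨hu, h2⟩))).1
  have hγ : γ' = γ := Finset.eq_of_subset_of_card_le hγ'γ (le_of_eq hcard.symm)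
  subst hγ
  have hle : v ≤ v' := by
    by_contra h2
    have := ((b_mem_mixA hb hord).1 (hsub ((b_mem_mixB hb hord).2 ⟨hv', le_refl v'⟩))).2
    exact h2 this
  have hlt : v < v' := hle.lt_of_ne (fun h => hne ⟨rfl, h.symm⟩)
  refine ⟨rfl, hlt, ?_⟩
  rintro u hu ⟨h2, h3⟩
  have := ((a_mem_mixA ha hord).1 (hsub ((a_mem_mixB ha hord).2 ⟨hu, h3⟩))).2
  exact absurd (h2.trans_le this) (lt_irrefl v)

include ha hb hord in
lemma pure_b_facet {δ γ : Finset V} {v : V} (hv : v ∈ γ) (hcard : δ.card = γ.card)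
    (hsub : δ.image b ⊆ mixA a b γ v) : δ = γ ∧ mixB a b γ v = δ.image b := by
  have h1 : ∀ u ∈ δ, u ∈ γ ∧ v ≤ u := by
    intro u hu
    exact (b_mem_mixA hb hord).1 (hsub (Finset.mem_image_of_mem b hu))
  have hδγ : δ ⊆ γ := fun u hu => (h1 u hu).1
  have hδ : δ = γ := Finset.eq_of_subset_of_card_le hδγ (le_of_eq hcard.symm)
  subst hδ
  exact ⟨rfl, mixB_eq_image_b (fun u hu => (h1 u hu).2)⟩

include ha hb hord in
lemma pure_a_facet {δ γ : Finset V} {v : V} (hv : v ∈ γ) (hcard : δ.card = γ.card)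
    (hsub : δ.image a ⊆ mixA a b γ v) : δ = γ ∧ ∀ u ∈ γ, u ≤ v := by
  have h1 : ∀ u ∈ δ, u ∈ γ ∧ u ≤ v := by
    intro u hu
    exact (a_mem_mixA ha hord).1 (hsub (Finset.mem_image_of_mem a hu))
  have hδγ : δ ⊆ γ := fun u hu => (h1 u hu).1
  have hδ : δ = γ := Finset.eq_of_subset_of_card_le hδγ (le_of_eq hcard.symm)
  subst hδ
  exact ⟨rfl, fun u hu => (h1 u hu).2⟩

include ha hb hord in
lemma traj_from_b {σ : Finset V} (P : ExtTraj (prismVF a b C))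
    (h0 : P.t 0 = σ.image b) (hk : 1 ≤ P.k) :
    ∃ γ ∈ C, γ ⊆ σ ∧ γ.card + 1 = σ.card ∧
      ∀ i, 1 ≤ i → i ≤ P.k → ∃ v ∈ γ, P.s i = mixB a b γ v ∧ P.t i = mixA a b γ v ∧
        (γ.filter (· < v)).card + 1 = i := by
  obtain ⟨γ, hγC, v₁, hv₁, hs1, ht1⟩ := mem_prismVF_pair.1 (P.mem 1 le_rfl hk)
  have hsub1 := P.sub 1 le_rfl (by omega)
  rw [hs1, show (1:ℕ) - 1 = 0 from rfl, h0] at hsub1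
  have hnolt : ∀ u ∈ γ, ¬ u < v₁ := by
    intro u hu hlt
    exact a_not_mem_image_b hord (hsub1 ((a_mem_mixB ha hord).2 ⟨hu, hlt⟩))
  have hfil : γ.filter (· < v₁) = ∅ := by
    rw [Finset.filter_eq_empty_iff]; exact hnolt
  have hγσ : γ ⊆ σ := by
    intro u hu
    have : b u ∈ σ.image b :=
      hsub1 ((b_mem_mixB hb hord).2 ⟨hu, not_lt.1 (hnolt u hu)⟩)
    exact (b_mem_image_b hb).1 this
  have hcards : γ.card + 1 = σ.card := by
    have := P.dim_s 1 le_rfl (by omega)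
    rw [hs1, card_mixB ha hb hord hv₁, h0, Finset.card_image_of_injective _ hb.injective]
      at this
    exact this
  refine ⟨γ, hγC, hγσ, hcards, ?_⟩
  intro i hi
  induction i, hi using Nat.le_induction with
  | base =>
    intro _
    exact ⟨v₁, hv₁, hs1, ht1, by rw [hfil]; rfl⟩
  | succ i hi ih =>
    intro hik
    obtain ⟨v, hv, hsv, htv, hrank⟩ := ih (by omega)
    obtain ⟨γ₂, hγ₂, v₂, hv₂, hs2, ht2⟩ := mem_prismVF_pair.1 (P.mem (i+1) (by omega) hik)
    have hsub := P.sub (i+1) (by omega) (by omega)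
    rw [Nat.add_sub_cancel, hs2, htv] at hsub
    have hc2 : γ₂.card = γ.card := by
      have d1 := P.dim_s (i+1) (by omega) (by omega)
      have d2 := P.dim_s i (by omega) (by omega)
      rw [hs2, card_mixB ha hb hord hv₂] at d1
      rw [hsv, card_mixB ha hb hord hv] at d2
      omega
    have hne : ¬(γ₂ = γ ∧ v₂ = v) := by
      rintro ⟨rfl, rfl⟩
      refine P.nmem (i+1) (by omega) (by omega) ?_
      rw [Nat.add_sub_cancel, hs2, htv]
      exact ⟨γ₂, hγ₂, v₂, hv₂, rfl⟩
    obtain ⟨hγeq, hlt, hmid⟩ := mixB_subset_mixA_step ha hb hord hv hv₂ hc2 hsub hne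
    subst hγeq
    refine ⟨v₂, hv₂, hs2, ht2, ?_⟩
    rw [rank_succ hv hlt hmid]
    omega

end Trajectories

section Zig

open Finset

variable {V : Type*} {U : Type*} [LinearOrder V] [LinearOrder U]
variable {a b : V → U} {C : Set (Finset V)}
variable (ha : StrictMono a) (hb : StrictMono b) (hord : ∀ u v : V, a u < b v)

lemma exists_orderEmbOfFin_eq {γ : Finset V} {n : ℕ} (h : γ.card = n) {u : V} (hu : u ∈ γ) :
    ∃ l : Fin n, γ.orderEmbOfFin h l = u := by
  rw [← Finset.mem_coe, ← Finset.range_orderEmbOfFin γ h] at hu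
  exact hu

/-- The `t`-function of the zig-zag trajectory. -/
def zigT (a b : V → U) (γ σ : Finset V) : ℕ → Finset U := fun i =>
  if h0 : i = 0 then σ.image b
  else if h : i ≤ γ.card then mixA a b γ (γ.orderEmbOfFin rfl ⟨i - 1, by omega⟩)
  else ∅

/-- The `s`-function of the zig-zag trajectory. -/
def zigS (a b : V → U) (γ : Finset V) : ℕ → Finset U := fun i =>
  if h0 : i = 0 then ∅
  else if h : i ≤ γ.card then mixB a b γ (γ.orderEmbOfFin rfl ⟨i - 1, by omega⟩)
  else if i = γ.card + 1 then γ.image a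
  else ∅

lemma zigT_zero {γ σ : Finset V} : zigT a b γ σ 0 = σ.image b := by simp [zigT]

lemma zigT_of {γ σ : Finset V} {i : ℕ} (h1 : 1 ≤ i) (h2 : i ≤ γ.card) :
    zigT a b γ σ i = mixA a b γ (γ.orderEmbOfFin rfl ⟨i - 1, by omega⟩) := by
  rw [zigT, dif_neg (by omega), dif_pos h2]

lemma zigT_pad {γ σ : Finset V} {i : ℕ} (h : γ.card < i) : zigT a b γ σ i = ∅ := by
  rw [zigT, dif_neg (by omega), dif_neg (by omega)]

lemma zigS_zero {γ : Finset V} : zigS a b γ 0 = ∅ := by simp [zigS]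

lemma zigS_of {γ : Finset V} {i : ℕ} (h1 : 1 ≤ i) (h2 : i ≤ γ.card) :
    zigS a b γ i = mixB a b γ (γ.orderEmbOfFin rfl ⟨i - 1, by omega⟩) := by
  rw [zigS, dif_neg (by omega), dif_pos h2]

lemma zigS_top {γ : Finset V} : zigS a b γ (γ.card + 1) = γ.image a := by
  rw [zigS, dif_neg (by omega), dif_neg (by omega), if_pos rfl]

lemma zigS_pad {γ : Finset V} {i : ℕ} (h : γ.card + 1 < i) : zigS a b γ i = ∅ := by
  rw [zigS, dif_neg (by omega), dif_neg (by omega), if_neg (by omega)]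

variable {σ γ : Finset V}

include ha hb hord in
lemma orderEmb_max (hne : γ.Nonempty) (u : V) (hu : u ∈ γ) :
    u ≤ γ.orderEmbOfFin rfl ⟨γ.card - 1, by
      have : 0 < γ.card := Finset.card_pos.2 hne; omega⟩ := by
  obtain ⟨l, rfl⟩ := exists_orderEmbOfFin_eq rfl hu
  apply (γ.orderEmbOfFin rfl).monotone
  have := l.2
  rw [Fin.le_def]
  simp only [Fin.val_mk]
  omega

/-- The zig-zag trajectory through the prism over `γ`, starting at `σ_B̄`. -/
def zigTraj (hγC : γ ∈ C) (hγσ : γ ⊆ σ) (hcard : γ.card + 1 = σ.card)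
    (hne : γ.Nonempty) : ExtTraj (prismVF a b C) where
  k := γ.card
  t := zigT a b γ σ
  s := zigS a b γ
  dim_t := by
    intro i hi
    rw [zigT_zero, Finset.card_image_of_injective _ hb.injective]
    rcases Nat.eq_zero_or_pos i with rfl | h1
    · rw [zigT_zero, Finset.card_image_of_injective _ hb.injective]
    · rw [zigT_of h1 hi, card_mixA ha hb hord (Finset.orderEmbOfFin_mem _ _ _), hcard]
  dim_s := by
    intro i h1 h2
    rw [zigT_zero, Finset.card_image_of_injective _ hb.injective]
    rcases Nat.lt_or_ge i (γ.card + 1) with h3 | h3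
    · rw [zigS_of h1 (by omega), card_mixB ha hb hord (Finset.orderEmbOfFin_mem _ _ _), hcard]
    · have : i = γ.card + 1 := by omega
      subst this
      rw [zigS_top, Finset.card_image_of_injective _ ha.injective, hcard]
  mem := by
    intro i h1 h2
    rw [zigS_of h1 h2, zigT_of h1 h2]
    exact ⟨γ, hγC, _, Finset.orderEmbOfFin_mem _ _ _, rfl⟩
  sub := by
    intro i h1 h2
    rcases eq_or_ne i 1 with rfl | hne1
    · have hc : 0 < γ.card := Finset.card_pos.2 hne
      rw [zigS_of le_rfl hc]
      refine subset_trans (Finset.Subset.refl _) ?_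
      show mixB a b γ ((γ.orderEmbOfFin rfl) ⟨1 - 1, by omega⟩) ⊆ zigT a b γ σ 0
      rw [zigT_zero]
      have hmin : ∀ u ∈ γ, γ.orderEmbOfFin rfl ⟨0, hc⟩ ≤ u := by
        intro u hu
        obtain ⟨l, rfl⟩ := exists_orderEmbOfFin_eq rfl hu
        exact (γ.orderEmbOfFin rfl).monotone (by simp [Fin.le_def])
      rw [mixB_eq_image_b hmin]
      exact Finset.image_subset_image hγσ
    · rcases Nat.lt_or_ge i (γ.card + 1) with h3 | h3
      · have h2' : 2 ≤ i := by omega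
        rw [zigS_of (by omega) (by omega), zigT_of (by omega) (by omega)]
        intro x hx
        rcases mem_mixB_elim hx with ⟨u, hu, rfl⟩ | ⟨u, hu, rfl⟩
        · have hlt := ((a_mem_mixB ha hord).1 hx).2
          obtain ⟨l, rfl⟩ := exists_orderEmbOfFin_eq rfl hu
          have hl : l < (⟨i - 1, by omega⟩ : Fin γ.card) :=
            (OrderEmbedding.lt_iff_lt _).1 hlt
          refine (a_mem_mixA ha hord).2 ⟨hu, ?_⟩
          apply (γ.orderEmbOfFin rfl).monotone
          rw [Fin.le_def]
          rw [Fin.lt_def] at hl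
          simp only [Fin.val_mk] at hl ⊢
          omega
        · have hge := ((b_mem_mixB hb hord).1 hx).2
          refine (b_mem_mixA hb hord).2 ⟨hu, le_trans ?_ hge⟩
          apply (γ.orderEmbOfFin rfl).monotone
          rw [Fin.le_def]
          simp only [Fin.val_mk]
          omega
      · have : i = γ.card + 1 := by omega
        subst this
        rw [zigS_top, zigT_of (by have := Finset.card_pos.2 hne; omega) (by omega)]
        intro x hx
        rcases Finset.mem_image.1 hx with ⟨u, hu, rfl⟩
        refine (a_mem_mixA ha hord).2 ⟨hu, ?_⟩
        obtain ⟨l, rfl⟩ := exists_orderEmbOfFin_eq rfl hu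
        apply (γ.orderEmbOfFin rfl).monotone
        rw [Fin.le_def]
        simp only [Fin.val_mk]
        have := l.2
        omega
  nmem := by
    intro i h1 h2
    rcases eq_or_ne i 1 with rfl | hne1
    · rw [show (1:ℕ) - 1 = 0 from rfl, zigT_zero]
      exact not_W_snd_pure_b ha hb hord
    · rcases Nat.lt_or_ge i (γ.card + 1) with h3 | h3
      · have h2' : 2 ≤ i := by omega
        rw [zigS_of (by omega) (by omega), zigT_of (by omega) (by omega)]
        intro hW
        obtain ⟨γ'', hγ'', v'', hv'', e1, e2⟩ := mem_prismVF_pair.1 hW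
        obtain ⟨hγeq, hveq⟩ :=
          mixB_injective ha hb hord (Finset.orderEmbOfFin_mem _ _ _) hv'' e1
        subst hγeq
        rw [← hveq] at e2
        have hmem : a (γ.orderEmbOfFin rfl ⟨i - 1, by omega⟩) ∈
            mixA a b γ (γ.orderEmbOfFin rfl ⟨i - 1, by omega⟩) :=
          (a_mem_mixA ha hord).2 ⟨Finset.orderEmbOfFin_mem _ _ _, le_rfl⟩
        rw [← e2] at hmem
        have hle := ((a_mem_mixA ha hord).1 hmem).2
        have := (OrderEmbedding.le_iff_le (γ.orderEmbOfFin rfl)).1 hle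
        rw [Fin.le_def] at this
        simp only [Fin.val_mk] at this
        omega
      · have : i = γ.card + 1 := by omega
        subst this
        rw [zigS_top]
        exact not_W_fst_pure_a ha hb hord
  pad_t := fun i hi => zigT_pad hi
  pad_s := by
    rintro i (rfl | hi)
    · exact zigS_zero
    · exact zigS_pad hi

lemma zigTraj_mem_Gamma {hγC : γ ∈ C} {hγσ : γ ⊆ σ} {hcard : γ.card + 1 = σ.card}
    {hne : γ.Nonempty} :
    zigTraj ha hb hord hγC hγσ hcard hne ∈ Gamma (prismVF a b C) (σ.image b) (γ.image a) :=
  ⟨zigT_zero (a := a) (b := b) (γ := γ) (σ := σ), zigS_top (a := a) (b := b) (γ := γ)⟩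

end Zig

section ZigWeight

open Finset

variable {V : Type*} {U : Type*} [LinearOrder V] [LinearOrder U]
variable {a b : V → U} {C : Set (Finset V)}
variable (ha : StrictMono a) (hb : StrictMono b) (hord : ∀ u v : V, a u < b v)
variable {σ γ : Finset V}

include ha hb hord in
lemma zigTraj_weight (hγC : γ ∈ C) (hγσ : γ ⊆ σ) (hcard : γ.card + 1 = σ.card)
    (hne : γ.Nonempty) :
    (zigTraj ha hb hord hγC hγσ hcard hne).weight = incidence σ γ := by
  obtain ⟨m, hm⟩ : ∃ m, γ.card = m + 1 :=
    Nat.exists_eq_succ_of_ne_zero (Finset.card_ne_zero.2 hne)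
  have hrank : ∀ (j : ℕ) (h : j < γ.card),
      (γ.filter (· < γ.orderEmbOfFin rfl ⟨j, h⟩)).card = j := fun j h =>
    rank_orderEmbOfFin rfl ⟨j, h⟩
  -- the diagonal incidences
  have hdiag : ∀ (j : ℕ) (h : j < γ.card),
      incidence (mixA a b γ (γ.orderEmbOfFin rfl ⟨j, h⟩))
        (mixB a b γ (γ.orderEmbOfFin rfl ⟨j, h⟩)) = (-1 : ℤ) ^ j := by
    intro j h
    rw [incidence_mixA_mixB ha hb hord (Finset.orderEmbOfFin_mem _ _ _), hrank j h]
  -- the off-diagonal incidences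
  have hoff : ∀ (j : ℕ) (h : j + 1 < γ.card),
      incidence (mixA a b γ (γ.orderEmbOfFin rfl ⟨j, by omega⟩))
        (mixB a b γ (γ.orderEmbOfFin rfl ⟨j + 1, h⟩)) = (-1 : ℤ) ^ (j + 1) := by
    intro j h
    rw [incidence_mixA_mixB_succ ha hb hord (Finset.orderEmbOfFin_mem _ _ _)
      (Finset.orderEmbOfFin_mem _ _ _) ?_ ?_, hrank j (by omega)]
    · exact (OrderEmbedding.lt_iff_lt _).2 (by rw [Fin.lt_def]; simp only [Fin.val_mk]; omega)
    · rintro u hu ⟨hu1, hu2⟩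
      obtain ⟨l, rfl⟩ := exists_orderEmbOfFin_eq rfl hu
      have l1 := (OrderEmbedding.lt_iff_lt (γ.orderEmbOfFin rfl)).1 hu1
      have l2 := (OrderEmbedding.lt_iff_lt (γ.orderEmbOfFin rfl)).1 hu2
      rw [Fin.lt_def] at l1 l2
      simp only [Fin.val_mk] at l1 l2
      omega
  have hlast : incidence (zigT a b γ σ γ.card) (zigS a b γ (γ.card + 1)) =
      (-1 : ℤ) ^ γ.card := by
    rw [zigT_of (by omega) le_rfl, zigS_top]
    rw [incidence_mixA_top ha hb hord (Finset.orderEmbOfFin_mem _ _ _)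
      (orderEmb_max ha hb hord hne)]
  have hstart : incidence (zigT a b γ σ 0) (zigS a b γ 1) = incidence σ γ := by
    have hc : 0 < γ.card := by omega
    rw [zigT_zero, zigS_of le_rfl hc]
    have hmin : ∀ u ∈ γ, γ.orderEmbOfFin rfl ⟨1 - 1, by omega⟩ ≤ u := by
      intro u hu
      obtain ⟨l, rfl⟩ := exists_orderEmbOfFin_eq rfl hu
      exact (γ.orderEmbOfFin rfl).monotone (by rw [Fin.le_def]; simp [Fin.val_mk])
    rw [mixB_eq_image_b hmin, incidence_image hb]
  -- now the product
  rw [ExtTraj.weight]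
  show (∏ i ∈ Finset.range γ.card,
      -(incidence (zigT a b γ σ i) (zigS a b γ (i + 1)) *
        incidence (zigT a b γ σ (i + 1)) (zigS a b γ (i + 1)))) *
    incidence (zigT a b γ σ γ.card) (zigS a b γ (γ.card + 1)) = incidence σ γ
  rw [hlast, hm, Finset.prod_range_succ']
  have hterm : ∀ i ∈ Finset.range m,
      -(incidence (zigT a b γ σ (i + 1)) (zigS a b γ (i + 1 + 1)) *
        incidence (zigT a b γ σ (i + 1 + 1)) (zigS a b γ (i + 1 + 1))) = -1 := by
    intro i hi
    rw [Finset.mem_range] at hi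
    have h1 : i + 1 + 1 ≤ γ.card := by omega
    rw [zigT_of (by omega) (by omega), zigS_of (by omega) h1,
      zigT_of (by omega) h1]
    have e1 : incidence (mixA a b γ (γ.orderEmbOfFin rfl ⟨i + 1 - 1, by omega⟩))
        (mixB a b γ (γ.orderEmbOfFin rfl ⟨i + 1 + 1 - 1, by omega⟩)) = (-1 : ℤ) ^ (i + 1) := by
      have := hoff i (by omega)
      convert this using 4 <;> simp
    have e2 : incidence (mixA a b γ (γ.orderEmbOfFin rfl ⟨i + 1 + 1 - 1, by omega⟩))
        (mixB a b γ (γ.orderEmbOfFin rfl ⟨i + 1 + 1 - 1, by omega⟩)) = (-1 : ℤ) ^ (i + 1) := by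
      have := hdiag (i + 1) (by omega)
      convert this using 4 <;> simp
    rw [e1, e2, ← pow_add]
    rw [Even.neg_one_pow ⟨i + 1, by omega⟩]
  rw [Finset.prod_congr rfl hterm, Finset.prod_const, Finset.card_range]
  have hg0 : -(incidence (zigT a b γ σ 0) (zigS a b γ (0 + 1)) *
      incidence (zigT a b γ σ (0 + 1)) (zigS a b γ (0 + 1))) = -(incidence σ γ) := by
    have hc : 0 < γ.card := by omega
    have e2 : incidence (zigT a b γ σ 1) (zigS a b γ 1) = 1 := by
      rw [zigT_of le_rfl hc, zigS_of le_rfl hc,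
        incidence_mixA_mixB ha hb hord (Finset.orderEmbOfFin_mem _ _ _),
        hrank (1 - 1) (by omega)]
      norm_num
    rw [show (0:ℕ) + 1 = 1 from rfl, hstart, e2, mul_one]
  rw [hg0]
  have h2 : ((-1 : ℤ) ^ m * (-1 : ℤ) ^ m) = 1 := by
    rw [← pow_add]; exact Even.neg_one_pow ⟨m, by omega⟩
  calc ((-1 : ℤ) ^ m * -(incidence σ γ)) * (-1) ^ (m + 1)
      = ((-1 : ℤ) ^ m * (-1 : ℤ) ^ m) * incidence σ γ := by rw [pow_succ]; ring
    _ = incidence σ γ := by rw [h2, one_mul]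

end ZigWeight

section GammaLemmas

open Finset

variable {V : Type*} {U : Type*} [LinearOrder V] [LinearOrder U]
variable {a b : V → U} {C : Set (Finset V)}
variable (ha : StrictMono a) (hb : StrictMono b) (hord : ∀ u v : V, a u < b v)
variable {σ γ δ : Finset V}

include ha hb hord in
lemma gamma_b_a_eq (hγC : γ ∈ C) (hγσ : γ ⊆ σ) (hcard : γ.card + 1 = σ.card)
    (hne : γ.Nonempty) :
    Gamma (prismVF a b C) (σ.image b) (γ.image a) =
      {zigTraj ha hb hord hγC hγσ hcard hne} := by
  ext P
  simp only [Set.mem_singleton_iff]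
  constructor
  · rintro ⟨h0, hterm⟩
    have hk1 : 1 ≤ P.k := by
      by_contra h
      have hk0 : P.k = 0 := by omega
      have hsub := P.sub 1 le_rfl (by omega)
      have hs1 : P.s 1 = γ.image a := by rw [← hterm, hk0]
      rw [hs1, show (1:ℕ) - 1 = 0 from rfl, h0] at hsub
      obtain ⟨u, hu⟩ := hne
      exact a_not_mem_image_b hord (hsub (Finset.mem_image_of_mem a hu))
    obtain ⟨γ', hγ'C, hγ'σ, hcard', hinv⟩ := traj_from_b ha hb hord P h0 hk1
    obtain ⟨v, hv, hsk, htk, hrankv⟩ := hinv P.k hk1 le_rfl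
    have hsubt := P.sub (P.k + 1) (by omega) (by omega)
    rw [Nat.add_sub_cancel, hterm, htk] at hsubt
    have hcards : γ.card = γ'.card := by
      have h1 := Finset.card_image_of_injective γ ha.injective
      omega
    obtain ⟨hγγ', hmax⟩ := pure_a_facet ha hb hord hv hcards hsubt
    subst hγγ'
    have hkn : P.k = γ.card := by
      have := rank_max hv hmax
      omega
    have hrk : ∀ (j : ℕ) (h : j < γ.card),
        (γ.filter (· < γ.orderEmbOfFin rfl ⟨j, h⟩)).card = j := fun j h =>
      rank_orderEmbOfFin rfl ⟨j, h⟩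
    apply ExtTraj.ext'
    · rw [hkn]; rfl
    · intro i
      rcases Nat.eq_zero_or_pos i with rfl | hi1
      · rw [h0]
        exact (zigT_zero (a := a) (b := b) (γ := γ) (σ := σ)).symm
      · rcases Nat.lt_or_ge P.k i with h2 | h2
        · rw [P.pad_t i h2]
          exact (zigT_pad (by omega)).symm
        · obtain ⟨w, hw, hsw, htw, hrankw⟩ := hinv i hi1 h2
          rw [htw]
          show _ = zigT a b γ σ i
          rw [zigT_of hi1 (by omega)]
          congr 1
          refine rank_injOn hw (Finset.orderEmbOfFin_mem _ _ _) ?_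
          rw [hrk (i - 1) (by omega)]
          omega
    · intro i
      rcases Nat.eq_zero_or_pos i with rfl | hi1
      · rw [P.pad_s 0 (Or.inl rfl)]
        exact (zigS_zero (a := a) (b := b) (γ := γ)).symm
      · rcases Nat.lt_or_ge (P.k + 1) i with h2 | h2
        · rw [P.pad_s i (Or.inr h2)]
          exact (zigS_pad (by omega)).symm
        · rcases eq_or_ne i (P.k + 1) with rfl | hne2
          · rw [hterm]
            show _ = zigS a b γ (P.k + 1)
            rw [hkn]
            exact (zigS_top (a := a) (b := b) (γ := γ)).symm
          · obtain ⟨w, hw, hsw, htw, hrankw⟩ := hinv i hi1 (by omega)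
            rw [hsw]
            show _ = zigS a b γ i
            rw [zigS_of hi1 (by omega)]
            congr 1
            refine rank_injOn hw (Finset.orderEmbOfFin_mem _ _ _) ?_
            rw [hrk (i - 1) (by omega)]
            omega
  · rintro rfl
    exact zigTraj_mem_Gamma ha hb hord

include ha hb hord in
lemma gamma_b_a_empty (hδne : δ.Nonempty) (hnsub : ¬ δ ⊆ σ) :
    Gamma (prismVF a b C) (σ.image b) (δ.image a) = ∅ := by
  ext P
  simp only [Set.mem_empty_iff_false, iff_false]
  rintro ⟨h0, hterm⟩
  rcases Nat.eq_zero_or_pos P.k with hk0 | hk1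
  · have hsub := P.sub 1 le_rfl (by omega)
    have hs1 : P.s 1 = δ.image a := by rw [← hterm, hk0]
    rw [hs1, show (1:ℕ) - 1 = 0 from rfl, h0] at hsub
    obtain ⟨u, hu⟩ := hδne
    exact a_not_mem_image_b hord (hsub (Finset.mem_image_of_mem a hu))
  · obtain ⟨γ', hγ'C, hγ'σ, hcard', hinv⟩ := traj_from_b ha hb hord P h0 hk1
    obtain ⟨v, hv, hsk, htk, hrankv⟩ := hinv P.k hk1 le_rfl
    have hsubt := P.sub (P.k + 1) (by omega) (by omega)
    rw [Nat.add_sub_cancel, hterm, htk] at hsubt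
    have hcards : δ.card = γ'.card := by
      have d1 := P.dim_s (P.k + 1) (by omega) le_rfl
      rw [hterm, Finset.card_image_of_injective _ ha.injective, h0,
        Finset.card_image_of_injective _ hb.injective] at d1
      omega
    obtain ⟨rfl, -⟩ := pure_a_facet ha hb hord hv hcards hsubt
    exact hnsub hγ'σ

include ha hb hord in
lemma gamma_pure_a_eq {σ' : Finset U} (hsub : σ' ⊆ σ.image a)
    (hcard : σ'.card + 1 = (σ.image a).card) (hW : (σ', σ.image a) ∉ prismVF a b C) :
    Gamma (prismVF a b C) (σ.image a) σ' =
      {trivTraj (prismVF a b C) (σ.image a) σ' hsub hcard hW} := by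
  ext P
  simp only [Set.mem_singleton_iff]
  constructor
  · intro hP
    exact eq_trivTraj hP (k_eq_zero_of_pure_a ha hb hord P hP.1)
  · rintro rfl
    exact trivTraj_mem_Gamma

lemma gamma_empty_of_not_sub {W : Set (Finset U × Finset U)} {τ σ' : Finset U}
    (hnsub : ¬ σ' ⊆ τ) (hzero : ∀ P : ExtTraj W, P ∈ Gamma W τ σ' → P.k = 0) :
    Gamma W τ σ' = ∅ := by
  ext P
  simp only [Set.mem_empty_iff_false, iff_false]
  intro hP
  have hk0 := hzero P hP
  have hsub := P.sub 1 le_rfl (by omega)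
  have hs1 : P.s 1 = σ' := by rw [← hP.2, hk0]
  rw [hs1, show (1:ℕ) - 1 = 0 from rfl, hP.1] at hsub
  exact hnsub hsub

include ha hb hord in
lemma tsCoeff_from_a {σ' : Finset U} (hcard : σ'.card + 1 = (σ.image a).card) :
    tsCoeff (prismVF a b C) (σ.image a) σ' = incidence (σ.image a) σ' := by
  have hW : (σ', σ.image a) ∉ prismVF a b C := fun h =>
    (crit_pure_a ha hb hord σ _ h).2 rfl
  by_cases hsub : σ' ⊆ σ.image a
  · rw [tsCoeff, gamma_pure_a_eq ha hb hord hsub hcard hW, finsum_mem_singleton,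
      trivTraj_weight]
  · rw [tsCoeff, gamma_empty_of_not_sub hsub
      (fun P hP => k_eq_zero_of_pure_a ha hb hord P hP.1), finsum_mem_empty,
      incidence_eq_zero (fun h => hsub h.1)]

include ha hb hord in
lemma tsCoeff_b_b (hδ : δ ∉ C) (hcard : δ.card + 1 = σ.card) :
    tsCoeff (prismVF a b C) (σ.image b) (δ.image b) = incidence σ δ := by
  have hzero : ∀ P : ExtTraj (prismVF a b C),
      P ∈ Gamma (prismVF a b C) (σ.image b) (δ.image b) → P.k = 0 := by
    intro P hP
    by_contra h
    have hk1 : 1 ≤ P.k := by omega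
    obtain ⟨γ', hγ'C, hγ'σ, hcard', hinv⟩ := traj_from_b ha hb hord P hP.1 hk1
    obtain ⟨v, hv, hsk, htk, hrankv⟩ := hinv P.k hk1 le_rfl
    have hsubt := P.sub (P.k + 1) (by omega) (by omega)
    rw [Nat.add_sub_cancel, hP.2, htk] at hsubt
    have hcards : δ.card = γ'.card := by omega
    obtain ⟨rfl, -⟩ := pure_b_facet ha hb hord hv hcards hsubt
    exact hδ hγ'C
  by_cases hsub : δ ⊆ σ
  · have hsub' : δ.image b ⊆ σ.image b := Finset.image_subset_image hsub
    have hcard' : (δ.image b).card + 1 = (σ.image b).card := by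
      rw [Finset.card_image_of_injective _ hb.injective,
        Finset.card_image_of_injective _ hb.injective]
      exact hcard
    have hW : (δ.image b, σ.image b) ∉ prismVF a b C := not_W_snd_pure_b ha hb hord
    have hGamma : Gamma (prismVF a b C) (σ.image b) (δ.image b) =
        {trivTraj (prismVF a b C) (σ.image b) (δ.image b) hsub' hcard' hW} := by
      ext P
      simp only [Set.mem_singleton_iff]
      exact ⟨fun hP => eq_trivTraj hP (hzero P hP), fun h => h ▸ trivTraj_mem_Gamma⟩
    rw [tsCoeff, hGamma, finsum_mem_singleton, trivTraj_weight, incidence_image hb]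
  · have hnsub' : ¬ δ.image b ⊆ σ.image b := fun h =>
      hsub ((Finset.image_subset_image_iff hb.injective).1 h)
    rw [tsCoeff, gamma_empty_of_not_sub hnsub' hzero, finsum_mem_empty,
      incidence_eq_zero (fun h => hsub h.1)]

include ha hb hord in
lemma tsCoeff_b_a_mem (hγC : γ ∈ C) (hγσ : γ ⊆ σ) (hcard : γ.card + 1 = σ.card)
    (hne : γ.Nonempty) :
    tsCoeff (prismVF a b C) (σ.image b) (γ.image a) = incidence σ γ := by
  rw [tsCoeff, gamma_b_a_eq ha hb hord hγC hγσ hcard hne, finsum_mem_singleton,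
    zigTraj_weight]

include ha hb hord in
lemma tsCoeff_b_a_nosub (hδne : δ.Nonempty) (hnsub : ¬ δ ⊆ σ) :
    tsCoeff (prismVF a b C) (σ.image b) (δ.image a) = 0 := by
  rw [tsCoeff, gamma_b_a_empty ha hb hord hδne hnsub, finsum_mem_empty]

end GammaLemmas

section MainLemmas

open Finset

variable {V : Type*} {U : Type*} [Fintype V] [LinearOrder V] [LinearOrder U]
variable {a b : V → U} {A B : Set (Finset V)}
variable (ha : StrictMono a) (hb : StrictMono b) (hord : ∀ u v : V, a u < b v)

include ha hb hord in
lemma tsCoeff_GS (hA : IsComplex A) (hB : IsComplex B) {q : ℕ} {τ σ' : Finset U}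
    (hτ : τ ∈ critSet (tilde a b A B) (prismVF a b (A ∩ B)) (q + 1))
    (hσ' : σ' ∈ critSet (tilde a b A B) (prismVF a b (A ∩ B)) q) :
    tsCoeff (prismVF a b (A ∩ B)) τ σ' = incidence (GS a b τ) (GS a b σ') := by
  rw [critSet_char ha hb hord hA hB] at hτ hσ'
  have hσ'card : σ'.card = q + 1 := by
    rcases hσ' with ⟨δ, _, hδc, rfl⟩ | ⟨δ, _, _, hδc, rfl⟩
    · rw [Finset.card_image_of_injective _ ha.injective]; exact hδc
    · rw [Finset.card_image_of_injective _ hb.injective]; exact hδc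
  rcases hτ with ⟨σ, hσA, hσc, rfl⟩ | ⟨σ, hσB, hσA, hσc, rfl⟩
  · rw [GS_image_a ha hord, tsCoeff_from_a ha hb hord
      (by rw [Finset.card_image_of_injective _ ha.injective]; omega)]
    rcases hσ' with ⟨δ, hδA, hδc, rfl⟩ | ⟨δ, hδB, hδA, hδc, rfl⟩
    · rw [incidence_image ha, GS_image_a ha hord]
    · rw [GS_image_b hb hord]
      have hδne : δ.Nonempty := Finset.card_pos.1 (by omega)
      have h1 : incidence (σ.image a) (δ.image b) = 0 := by
        refine incidence_eq_zero ?_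
        rintro ⟨hsub, -⟩
        obtain ⟨u, hu⟩ := hδne
        exact b_not_mem_image_a hord (hsub (Finset.mem_image_of_mem b hu))
      have h2 : incidence σ δ = 0 := by
        refine incidence_eq_zero ?_
        rintro ⟨hsub, -⟩
        exact hδA ((hA.2 σ hσA).2 δ hsub hδne)
      rw [h1, h2]
  · have hσC : σ ∉ A ∩ B := fun h => hσA h.1
    have hσcard : σ.card = q + 2 := by omega
    rw [GS_image_b hb hord]
    rcases hσ' with ⟨δ, hδA, hδc, rfl⟩ | ⟨δ, hδB, hδA', hδc, rfl⟩
    · rw [GS_image_a ha hord]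
      have hδne : δ.Nonempty := Finset.card_pos.1 (by omega)
      by_cases hsub : δ ⊆ σ
      · have hδB : δ ∈ B := (hB.2 σ hσB).2 δ hsub hδne
        exact tsCoeff_b_a_mem ha hb hord ⟨hδA, hδB⟩ hsub (by omega) hδne
      · rw [tsCoeff_b_a_nosub ha hb hord hδne hsub,
          incidence_eq_zero (fun h => hsub h.1)]
    · rw [GS_image_b hb hord]
      exact tsCoeff_b_b ha hb hord (fun h => hδA' h.1) (by omega)

end MainLemmas

section Plumbing

lemma chainBoundary_single {ι κ : Type*} (coeff : ι → κ → ℤ) (i : ι) :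
    chainBoundary coeff (Finsupp.single i 1) = ∑ᶠ j : κ, coeff i j • Finsupp.single j 1 := by
  rw [chainBoundary, Finsupp.lsum_single, LinearMap.toSpanSingleton_apply, one_smul]

lemma homologyAt_congr {L M N L' M' N' : Type*}
    [AddCommGroup L] [AddCommGroup M] [AddCommGroup N]
    [AddCommGroup L'] [AddCommGroup M'] [AddCommGroup N']
    (d : M →+ N) (d' : L →+ M) (d₂ : M' →+ N') (d₂' : L' →+ M')
    (eL : L ≃+ L') (eM : M ≃+ M') (eN : N ≃+ N')
    (h : ∀ x, eN (d x) = d₂ (eM x)) (h' : ∀ x, eM (d' x) = d₂' (eL x)) :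
    Nonempty (homologyAt d d' ≃+ homologyAt d₂ d₂') := by
  have hker : ∀ x : M, d x = 0 ↔ d₂ (eM x) = 0 := by
    intro x
    rw [← h]
    constructor
    · intro hx; rw [hx, map_zero]
    · intro hx; exact (AddEquiv.map_eq_zero_iff eN).1 hx
  let e1 : ↥d.ker ≃+ ↥d₂.ker :=
  { toFun := fun x => ⟨eM x.1,
      AddMonoidHom.mem_ker.2 ((hker x.1).1 (AddMonoidHom.mem_ker.1 x.2))⟩
    invFun := fun y => ⟨eM.symm y.1, by
      rw [AddMonoidHom.mem_ker, hker (eM.symm y.1)]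
      rw [AddEquiv.apply_symm_apply]
      exact AddMonoidHom.mem_ker.1 y.2⟩
    left_inv := fun x => Subtype.ext (eM.symm_apply_apply x.1)
    right_inv := fun y => Subtype.ext (eM.apply_symm_apply y.1)
    map_add' := fun x y => Subtype.ext (map_add eM x.1 y.1) }
  have he : (AddSubgroup.comap d.ker.subtype d'.range).map e1.toAddMonoidHom =
      AddSubgroup.comap d₂.ker.subtype d₂'.range := by
    ext y
    simp only [AddSubgroup.mem_map, AddSubgroup.mem_comap, AddMonoidHom.mem_range,
      AddSubgroup.coe_subtype]
    constructor
    · rintro ⟨x, ⟨l, hl⟩, rfl⟩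
      refine ⟨eL l, ?_⟩
      show d₂' (eL l) = eM x.1
      rw [← h', hl]
    · rintro ⟨l', hl'⟩
      have hym : d (eM.symm y.1) = 0 := by
        rw [hker (eM.symm y.1), AddEquiv.apply_symm_apply]
        exact AddMonoidHom.mem_ker.1 y.2
      refine ⟨⟨eM.symm y.1, AddMonoidHom.mem_ker.2 hym⟩, ⟨eL.symm l', ?_⟩, ?_⟩
      · show d' (eL.symm l') = eM.symm y.1
        apply eM.injective
        rw [h', AddEquiv.apply_symm_apply, AddEquiv.apply_symm_apply, hl']
      · exact Subtype.ext (eM.apply_symm_apply y.1)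
  exact ⟨QuotientAddGroup.congr _ _ e1 he⟩

end Plumbing



/-- The simplicial chain complex of `X` is isomorphic, as a chain
complex of abelian groups, to the Thom–Smale chain complex of `X̃` with respect to the
prism gradient vector field `𝒱`; an isomorphism is given on generators by
`σ_Ā ↦ σ` and `σ_B̄ ↦ σ`.  Consequently `H_#(X) ≅ H_#^𝒱(X̃)`. -/
theorem simplicial_iso_thomSmale_of_tilde
    {V : Type*} {U : Type*} [Fintype V] [LinearOrder V] [LinearOrder U]
    (X A B : Set (Finset V)) (a b : V → U)
    (hX : IsComplex X) (hA : IsComplex A) (hB : IsComplex B)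
    (hUnion : A ∪ B = X)
    (ha : StrictMono a) (hb : StrictMono b)
    (hab : ∀ u v : V, a u ≠ b v)
    (hord : ∀ u v : V, a u < b v) :
    ∃ e : ∀ q : ℕ,
        ((critSet (tilde a b A B) (prismVF a b (A ∩ B)) q : Set (Finset U)) →₀ ℤ) ≃+
          ((simpSet X q : Set (Finset V)) →₀ ℤ),
      (∀ q : ℕ, ∀ x,
          fullBoundary (simpSet X) incidence q (e q x) =
            e (q - 1)
              (fullBoundary (critSet (tilde a b A B) (prismVF a b (A ∩ B)))
                (tsCoeff (prismVF a b (A ∩ B))) q x)) ∧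
      (∀ q : ℕ,
          ∀ τ : (critSet (tilde a b A B) (prismVF a b (A ∩ B)) q : Set (Finset U)),
          ∀ s : (simpSet X q : Set (Finset V)),
          (e q (Finsupp.single τ 1)) s =
            if (s : Finset V) = GS a b (τ : Finset U) then 1 else 0) ∧
      ∀ q : ℕ,
        Nonempty (homologyOf (simpSet X) incidence q ≃+
          homologyOf (critSet (tilde a b A B) (prismVF a b (A ∩ B)))
            (tsCoeff (prismVF a b (A ∩ B))) q) := by
  classical
  -- the equivalence of generating sets
  obtain ⟨e0, he0⟩ : ∃ e0 : ∀ q : ℕ,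
      (critSet (tilde a b A B) (prismVF a b (A ∩ B)) q : Set (Finset U)) ≃
        (simpSet X q : Set (Finset V)),
      ∀ (q : ℕ) (τ), ((e0 q τ : Finset V)) = GS a b (τ : Finset U) := by
    have toMem : ∀ (q : ℕ) (τ : Finset U),
        τ ∈ critSet (tilde a b A B) (prismVF a b (A ∩ B)) q →
          GS a b τ ∈ simpSet X q := by
      intro q τ hτ
      rw [critSet_char ha hb hord hA hB] at hτ
      rcases hτ with ⟨σ, hσA, hc, rfl⟩ | ⟨σ, hσB, hσA, hc, rfl⟩
      · rw [GS_image_a ha hord]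
        exact ⟨by rw [← hUnion]; exact Or.inl hσA, hc⟩
      · rw [GS_image_b hb hord]
        exact ⟨by rw [← hUnion]; exact Or.inr hσB, hc⟩
    have invMemA : ∀ (q : ℕ) (s : Finset V), s ∈ simpSet X q → s ∈ A →
        s.image a ∈ critSet (tilde a b A B) (prismVF a b (A ∩ B)) q := by
      intro q s hs hsA
      rw [critSet_char ha hb hord hA hB]
      exact Or.inl ⟨s, hsA, hs.2, rfl⟩
    have invMemB : ∀ (q : ℕ) (s : Finset V), s ∈ simpSet X q → s ∉ A →
        s.image b ∈ critSet (tilde a b A B) (prismVF a b (A ∩ B)) q := by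
      intro q s hs hsA
      rw [critSet_char ha hb hord hA hB]
      have hsB : s ∈ B := by
        have := hs.1
        rw [← hUnion] at this
        rcases this with h | h
        · exact absurd h hsA
        · exact h
      exact Or.inr ⟨s, hsB, hsA, hs.2, rfl⟩
    refine ⟨fun q =>
      { toFun := fun τ => ⟨GS a b τ.1, toMem q τ.1 τ.2⟩
        invFun := fun s =>
          if h : (s : Finset V) ∈ A then ⟨(s : Finset V).image a, invMemA q s.1 s.2 h⟩
          else ⟨(s : Finset V).image b, invMemB q s.1 s.2 h⟩
        left_inv := fun τ => ?_
        right_inv := fun s => ?_ }, fun q τ => rfl⟩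
    · beta_reduce
      have hτ := (Set.ext_iff.1 (critSet_char ha hb hord hA hB q) τ.1).1 τ.2
      rcases hτ with ⟨σ, hσA, hc, hτeq⟩ | ⟨σ, hσB, hσA, hc, hτeq⟩
      · have hGS : GS a b τ.1 = σ := by rw [hτeq, GS_image_a ha hord]
        rw [dif_pos (show GS a b τ.1 ∈ A by rw [hGS]; exact hσA)]
        apply Subtype.ext
        show (GS a b τ.1).image a = τ.1
        rw [hGS, ← hτeq]
      · have hGS : GS a b τ.1 = σ := by rw [hτeq, GS_image_b hb hord]
        rw [dif_neg (show ¬ GS a b τ.1 ∈ A by rw [hGS]; exact hσA)]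
        apply Subtype.ext
        show (GS a b τ.1).image b = τ.1
        rw [hGS, ← hτeq]
    · beta_reduce
      by_cases h : (s : Finset V) ∈ A
      · rw [dif_pos h]
        apply Subtype.ext
        show GS a b ((s : Finset V).image a) = (s : Finset V)
        rw [GS_image_a ha hord]
      · rw [dif_neg h]
        apply Subtype.ext
        show GS a b ((s : Finset V).image b) = (s : Finset V)
        rw [GS_image_b hb hord]
  -- finiteness
  haveI hfinS : ∀ q : ℕ, Fintype (simpSet X q : Set (Finset V)) := fun q =>
    Fintype.ofFinite _
  haveI hfinK : ∀ q : ℕ,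
      Fintype (critSet (tilde a b A B) (prismVF a b (A ∩ B)) q : Set (Finset U)) :=
    fun q => Fintype.ofEquiv _ (e0 q).symm
  -- commutation with the boundary maps
  have hcomm : ∀ q : ℕ, ∀ x,
      fullBoundary (simpSet X) incidence q ((Finsupp.domCongr (e0 q)) x) =
        (Finsupp.domCongr (e0 (q - 1)))
          (fullBoundary (critSet (tilde a b A B) (prismVF a b (A ∩ B)))
            (tsCoeff (prismVF a b (A ∩ B))) q x) := by
    intro q
    cases q with
    | zero =>
      intro x
      have h1 : fullBoundary (simpSet X) incidence 0 = 0 := rfl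
      have h2 : fullBoundary (critSet (tilde a b A B) (prismVF a b (A ∩ B)))
          (tsCoeff (prismVF a b (A ∩ B))) 0 = 0 := rfl
      rw [h1, h2]
      simp
    | succ q =>
      have main : ∀ τ : (critSet (tilde a b A B) (prismVF a b (A ∩ B)) (q + 1) :
            Set (Finset U)),
          fullBoundary (simpSet X) incidence (q + 1)
              ((Finsupp.domCongr (e0 (q + 1))) (Finsupp.single τ (1 : ℤ))) =
            (Finsupp.domCongr (e0 q))
              (fullBoundary (critSet (tilde a b A B) (prismVF a b (A ∩ B)))
                (tsCoeff (prismVF a b (A ∩ B))) (q + 1) (Finsupp.single τ 1)) := by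
        intro τ
        have hd1 : (Finsupp.domCongr (e0 (q + 1))) (Finsupp.single τ (1 : ℤ)) =
            Finsupp.single (e0 (q + 1) τ) 1 := by
          simp [Finsupp.domCongr_apply]
        rw [hd1]
        show (chainBoundary fun (i : (simpSet X (q + 1) : Set (Finset V)))
              (j : (simpSet X q : Set (Finset V))) =>
              incidence (i : Finset V) (j : Finset V))
            (Finsupp.single (e0 (q + 1) τ) 1) =
          (Finsupp.domCongr (e0 q))
            ((chainBoundary fun
                (i : (critSet (tilde a b A B) (prismVF a b (A ∩ B)) (q + 1) :
                  Set (Finset U)))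
                (j : (critSet (tilde a b A B) (prismVF a b (A ∩ B)) q :
                  Set (Finset U))) =>
                tsCoeff (prismVF a b (A ∩ B)) (i : Finset U) (j : Finset U))
              (Finsupp.single τ 1))
        rw [chainBoundary_single, chainBoundary_single, finsum_eq_sum_of_fintype,
          finsum_eq_sum_of_fintype, map_sum]
        refine (Fintype.sum_equiv (e0 q) _ _ ?_).symm
        intro j
        rw [map_zsmul]
        have hd2 : (Finsupp.domCongr (e0 q)) (Finsupp.single j (1 : ℤ)) =
            Finsupp.single (e0 q j) 1 := by
          simp [Finsupp.domCongr_apply]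
        rw [hd2]
        have hco : tsCoeff (prismVF a b (A ∩ B)) (τ : Finset U) (j : Finset U) =
            incidence ((e0 (q + 1) τ : Finset V)) ((e0 q j : Finset V)) := by
          rw [he0, he0]
          exact tsCoeff_GS ha hb hord hA hB τ.2 j.2
        rw [hco]
      intro x
      have hFG : (fullBoundary (simpSet X) incidence (q + 1)).comp
          (Finsupp.domCongr (e0 (q + 1))).toAddMonoidHom =
          ((Finsupp.domCongr (e0 q)).toAddMonoidHom).comp
            (fullBoundary (critSet (tilde a b A B) (prismVF a b (A ∩ B)))
              (tsCoeff (prismVF a b (A ∩ B))) (q + 1)) := by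
        apply Finsupp.addHom_ext
        intro τ n
        have h1 : (Finsupp.single τ n : _ →₀ ℤ) = n • Finsupp.single τ (1 : ℤ) := by
          rw [Finsupp.smul_single, smul_eq_mul, mul_one]
        simp only [AddMonoidHom.comp_apply, AddEquiv.coe_toAddMonoidHom]
        rw [h1]
        simp only [map_zsmul]
        rw [main τ]
      exact DFunLike.congr_fun hFG x
  refine ⟨fun q => Finsupp.domCongr (e0 q), hcomm, ?_, ?_⟩
  · -- the formula on generators
    intro q τ s
    have h1 : (Finsupp.domCongr (e0 q)) (Finsupp.single τ (1 : ℤ)) =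
        Finsupp.single (e0 q τ) 1 := by
      simp [Finsupp.domCongr_apply]
    rw [h1, Finsupp.single_apply]
    have hiff : e0 q τ = s ↔ (s : Finset V) = GS a b (τ : Finset U) := by
      rw [Subtype.ext_iff]
      constructor
      · intro h; rw [← h, he0]
      · intro h; rw [he0 q τ, ← h]
    exact if_congr hiff rfl rfl
  · -- homology
    intro q
    obtain ⟨h⟩ := homologyAt_congr
      (fullBoundary (critSet (tilde a b A B) (prismVF a b (A ∩ B)))
        (tsCoeff (prismVF a b (A ∩ B))) q)
      (fullBoundary (critSet (tilde a b A B) (prismVF a b (A ∩ B)))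
        (tsCoeff (prismVF a b (A ∩ B))) (q + 1))
      (fullBoundary (simpSet X) incidence q)
      (fullBoundary (simpSet X) incidence (q + 1))
      (Finsupp.domCongr (e0 (q + 1))) (Finsupp.domCongr (e0 q))
      (Finsupp.domCongr (e0 (q - 1)))
      (fun x => (hcomm q x).symm) (fun x => (hcomm (q + 1) x).symm)
    exact ⟨h.symm⟩


end DMT
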